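/- arXiv:2407.18315 — 5 statements merged into one kernel-verified Lean document; each statement's English description precedes it below -/
import Mathlib

section
/- Let 1 ≤ p < ∞ and let (X,d,μ) satisfy the standing assumptions and be of globally p-controlled geometry. Then there exists a locally Lipschitz function f : X → ℝ such that f has an upper gradient g with ∫_X g^p dμ < ∞ (so f ∈ D^{1,p}(X)), while ∫_X |f − c|^p dμ = ∞ for every constant c ∈ ℝ; in particular D^{1,p}(X) ≠ N^{1,p}(X) + ℝ. -/
/-!
Fix `x₀`, put `m j = μ (B(x₀, 2 ^ (j + 1)))` and `T j = m j ^ (-1/p)`, which decreases to `0`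
because `μ X = ∞`. The radial function `f = h ∘ d(x₀, ·)`, where `h` increases by `T j - T (j + 1)`
at constant slope across the dyadic annulus `2 ^ j ≤ r < 2 ^ (j + 1)`, has its radial slope `g` as
an upper gradient, and `∫ g ^ p ≤ ∑ (T j / 2 ^ j) ^ p * m j = ∑ 2 ^ (-j p) < ∞`. On the `j`-th
annulus `f` lies between `T 0 - T j` and `T 0 - T (j + 1)`, so for every constant `c` eventually
`|f - c| ≥ T (j + 1)` there. By connectedness and doubling that annulus contains a ball whose
measure is comparable to `m (j + 1) = T (j + 1) ^ (-p)`, so each annulus contributes at least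
`C_d ^ (-4)` to `∫ |f - c| ^ p`.
-/

open MeasureTheory Metric Set Filter
open scoped ENNReal NNReal Topology

/-- `g` is an upper gradient of `u`: for every `L ≥ 0` and every `1`-Lipschitz curve
`γ : [0,L] → X`, one has `|u(γ L) - u(γ 0)| ≤ ∫₀^L g(γ t) dt`. -/
def IsUpperGradient {X : Type*} [MetricSpace X] (g : X → ℝ≥0∞) (u : X → ℝ) : Prop :=
  ∀ (L : ℝ) (γ : ℝ → X), 0 ≤ L → LipschitzOnWith 1 γ (Set.Icc 0 L) →
    ENNReal.ofReal |u (γ L) - u (γ 0)| ≤ ∫⁻ t in Set.Icc 0 L, g (γ t)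

/-- `(X,d,μ)` is of globally `p`-controlled geometry: the measure is globally doubling and a
global `p`-Poincaré inequality holds for function–upper-gradient pairs. -/
def GloballyControlledGeometry {X : Type*} [MetricSpace X] [MeasurableSpace X]
    (p : ℝ) (μ : Measure X) : Prop :=
  ∃ Cd C lam : ℝ, 1 ≤ Cd ∧ 0 < C ∧ 0 < lam ∧
    (∀ (x : X) (r : ℝ), 0 < r →
      μ (ball x (2 * r)) ≤ ENNReal.ofReal Cd * μ (ball x r)) ∧
    (∀ (u : X → ℝ) (g : X → ℝ≥0∞), LocallyIntegrable u μ → Measurable g →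
      IsUpperGradient g u → ∀ (x : X) (r : ℝ), 0 < r →
      ENNReal.ofReal (⨍ y in ball x r, |u y - ⨍ z in ball x r, u z ∂μ| ∂μ) ≤
        ENNReal.ofReal (C * r) *
          ((∫⁻ y in ball x (lam * r), g y ^ p ∂μ) / μ (ball x (lam * r))) ^ (1 / p))

theorem IsUpperGradient.comp_lipschitzWith {X Y : Type*} [MetricSpace X] [MetricSpace Y]
    {g : Y → ℝ≥0∞} {u : Y → ℝ} (hg : IsUpperGradient g u) {ρ : X → Y}
    (hρ : LipschitzWith 1 ρ) : IsUpperGradient (g ∘ ρ) (u ∘ ρ) := fun L γ hL hγ => by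
  simpa using hg L (ρ ∘ γ) hL (by simpa using hρ.comp_lipschitzOnWith hγ)

theorem volume_image_le_of_lipschitzOnWith_one {γ : ℝ → ℝ} {s : Set ℝ}
    (hγ : LipschitzOnWith 1 γ s) : volume (γ '' s) ≤ volume s := by
  simpa [hausdorffMeasure_real] using hγ.hausdorffMeasure_image_le zero_le_one

theorem volume_restrict_uIcc_le_map {γ : ℝ → ℝ} {L : ℝ} (hL : 0 ≤ L)
    (hγ : LipschitzOnWith 1 γ (Icc 0 L)) :
    volume.restrict (uIcc (γ 0) (γ L)) ≤ (volume.restrict (Icc 0 L)).map γ := by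
  have hγm : AEMeasurable γ (volume.restrict (Icc 0 L)) :=
    hγ.continuousOn.aemeasurable measurableSet_Icc
  refine Measure.le_iff.2 fun E hE => ?_
  rw [Measure.map_apply_of_aemeasurable hγm hE, Measure.restrict_apply hE,
    Measure.restrict_apply' measurableSet_Icc, inter_comm (γ ⁻¹' E)]
  calc volume (E ∩ uIcc (γ 0) (γ L))
      ≤ volume (γ '' (Icc 0 L ∩ γ ⁻¹' E)) := by
        refine measure_mono fun y ⟨hyE, hy⟩ => ?_
        rw [← uIcc_of_le hL] at hγ
        obtain ⟨t, ht, rfl⟩ := intermediate_value_uIcc hγ.continuousOn hy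
        exact ⟨t, ⟨by rwa [uIcc_of_le hL] at ht, hyE⟩, rfl⟩
    _ ≤ volume (Icc 0 L ∩ γ ⁻¹' E) :=
        volume_image_le_of_lipschitzOnWith_one (hγ.mono inter_subset_left)

theorem isUpperGradient_of_abs_sub_le_lintegral_uIcc {S : ℝ → ℝ≥0∞} {h : ℝ → ℝ}
    (hh : ∀ a b, ENNReal.ofReal |h b - h a| ≤ ∫⁻ r in uIcc a b, S r) :
    IsUpperGradient S h := fun L γ hL hγ =>
  calc ENNReal.ofReal |h (γ L) - h (γ 0)| ≤ ∫⁻ r in uIcc (γ 0) (γ L), S r := hh _ _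
    _ ≤ ∫⁻ r, S r ∂(volume.restrict (Icc 0 L)).map γ :=
        lintegral_mono' (volume_restrict_uIcc_le_map hL hγ) le_rfl
    _ ≤ ∫⁻ t in Icc 0 L, S (γ t) := lintegral_map_le _ _

/-- The `toReal` is junk (`0`) where the integral is infinite, which bounded `S` excludes. -/
noncomputable def lintegralPrimitive (S : ℝ → ℝ≥0∞) (r : ℝ) : ℝ :=
  (∫⁻ u in Icc 0 r, S u).toReal

section LintegralPrimitive

variable {S : ℝ → ℝ≥0∞} {K : ℝ≥0}

theorem setLIntegral_le_mul_volume_of_le (hS : ∀ u, S u ≤ K) (s : Set ℝ) :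
    ∫⁻ u in s, S u ≤ K * volume s :=
  (lintegral_mono fun u => hS u).trans_eq (setLIntegral_const _ _)

theorem lintegral_Icc_zero_ne_top (hS : ∀ u, S u ≤ K) (r : ℝ) : ∫⁻ u in Icc 0 r, S u ≠ ⊤ :=
  ne_top_of_le_ne_top (by simp [ENNReal.mul_eq_top]) (setLIntegral_le_mul_volume_of_le hS _)

theorem lintegralPrimitive_sub (hS : ∀ u, S u ≤ K) {a b : ℝ} (hab : a ≤ b) :
    lintegralPrimitive S b - lintegralPrimitive S a =
      (∫⁻ u in Icc 0 b \ Icc 0 a, S u).toReal := by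
  have hsub : Icc 0 a ⊆ Icc 0 b := Icc_subset_Icc_right hab
  rw [lintegralPrimitive, lintegralPrimitive, ← union_sdiff_cancel hsub,
    lintegral_union (measurableSet_Icc.diff measurableSet_Icc) disjoint_sdiff_right,
    ENNReal.toReal_add (lintegral_Icc_zero_ne_top hS a), add_sub_cancel_left,
    union_sdiff_cancel hsub]
  exact ne_top_of_le_ne_top (lintegral_Icc_zero_ne_top hS b) (lintegral_mono_set sdiff_subset)

theorem monotone_lintegralPrimitive (hS : ∀ u, S u ≤ K) : Monotone (lintegralPrimitive S) :=
  fun _ _ hab => sub_nonneg.1 ((lintegralPrimitive_sub hS hab).symm ▸ ENNReal.toReal_nonneg)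

theorem ofReal_lintegralPrimitive_sub_le (hS : ∀ u, S u ≤ K) {a b : ℝ} (hab : a ≤ b) :
    ENNReal.ofReal (lintegralPrimitive S b - lintegralPrimitive S a) ≤ ∫⁻ u in Ioc a b, S u := by
  rw [lintegralPrimitive_sub hS hab]
  refine ENNReal.ofReal_toReal_le.trans (lintegral_mono_set ?_)
  rintro u ⟨⟨hu0, hub⟩, hua⟩
  exact ⟨lt_of_not_ge fun hua' => hua ⟨hu0, hua'⟩, hub⟩

theorem isUpperGradient_lintegralPrimitive (hS : ∀ u, S u ≤ K) :
    IsUpperGradient S (lintegralPrimitive S) := by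
  have key : ∀ a b, a ≤ b → ENNReal.ofReal |lintegralPrimitive S b - lintegralPrimitive S a| ≤
      ∫⁻ r in uIcc a b, S r := fun a b hab => by
    rw [abs_of_nonneg (sub_nonneg.2 (monotone_lintegralPrimitive hS hab))]
    exact (ofReal_lintegralPrimitive_sub_le hS hab).trans
      (lintegral_mono_set (Ioc_subset_Icc_self.trans Icc_subset_uIcc))
  refine isUpperGradient_of_abs_sub_le_lintegral_uIcc fun a b => ?_
  rcases le_total a b with hab | hba
  · exact key a b hab
  · rw [abs_sub_comm, uIcc_comm]
    exact key b a hba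

theorem lipschitzWith_lintegralPrimitive (hS : ∀ u, S u ≤ K) :
    LipschitzWith K (lintegralPrimitive S) := by
  refine LipschitzWith.of_le_add_mul K fun b a => ?_
  rcases le_total b a with hba | hab
  · exact le_add_of_le_of_nonneg (monotone_lintegralPrimitive hS hba)
      (mul_nonneg K.coe_nonneg dist_nonneg)
  · have := (ofReal_lintegralPrimitive_sub_le hS hab).trans
      (setLIntegral_le_mul_volume_of_le hS _)
    rw [Real.volume_Ioc, ← ENNReal.ofReal_coe_nnreal, ← ENNReal.ofReal_mul K.coe_nonneg,
      ENNReal.ofReal_le_ofReal_iff (by have := sub_nonneg.2 hab; positivity)] at this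
    rw [Real.dist_eq, abs_of_nonneg (sub_nonneg.2 hab)]
    linarith

end LintegralPrimitive

noncomputable def dyadicStep (c : ℕ → ℝ≥0∞) (u : ℝ) : ℝ≥0∞ :=
  ∑' k, (Ico ((2 : ℝ) ^ k) (2 ^ (k + 1))).indicator (fun _ => c k) u

section DyadicStep

open scoped Function

variable (c : ℕ → ℝ≥0∞)

theorem pairwise_disjoint_Ico_two_pow :
    Pairwise (Disjoint on fun k : ℕ => Ico ((2 : ℝ) ^ k) (2 ^ (k + 1))) :=
  (pow_right_mono₀ one_le_two).pairwise_disjoint_on_Ico_succ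

theorem measurable_dyadicStep : Measurable (dyadicStep c) :=
  .tsum fun _ => measurable_const.indicator measurableSet_Ico

theorem dyadicStep_eq_of_mem {u : ℝ} {k : ℕ} (hu : u ∈ Ico ((2 : ℝ) ^ k) (2 ^ (k + 1))) :
    dyadicStep c u = c k := by
  rw [dyadicStep, tsum_eq_single k fun i hi =>
    indicator_of_notMem (disjoint_left.1 (pairwise_disjoint_Ico_two_pow hi.symm) hu) _]
  exact indicator_of_mem hu _

theorem dyadicStep_of_lt_one {u : ℝ} (hu : u < 1) : dyadicStep c u = 0 :=
  ENNReal.tsum_eq_zero.2 fun _ =>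
    indicator_of_notMem (fun hk => (one_le_pow₀ one_le_two).not_gt (hk.1.trans_lt hu)) _

theorem dyadicStep_le {K : ℝ≥0∞} (hc : ∀ k, c k ≤ K) (u : ℝ) : dyadicStep c u ≤ K := by
  rcases lt_or_ge u 1 with hu | hu
  · simp [dyadicStep_of_lt_one c hu]
  · obtain ⟨k, hk⟩ := exists_nat_pow_near hu one_lt_two
    exact (dyadicStep_eq_of_mem c hk).trans_le (hc k)

theorem dyadicStep_rpow {p : ℝ} (hp : 0 < p) (u : ℝ) :
    dyadicStep c u ^ p = dyadicStep (fun k => c k ^ p) u := by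
  rcases lt_or_ge u 1 with hu | hu
  · simp [dyadicStep_of_lt_one _ hu, hp]
  · obtain ⟨k, hk⟩ := exists_nat_pow_near hu one_lt_two
    rw [dyadicStep_eq_of_mem _ hk, dyadicStep_eq_of_mem _ hk]

theorem setLIntegral_Icc_zero_two_pow_dyadicStep (j : ℕ) :
    ∫⁻ u in Icc 0 ((2 : ℝ) ^ j), dyadicStep c u = ∑ k ∈ Finset.range j, c k * 2 ^ k := by
  simp_rw [dyadicStep]
  rw [lintegral_tsum fun k => (measurable_const.indicator measurableSet_Ico).aemeasurable]
  simp_rw [lintegral_indicator_const measurableSet_Ico, Measure.restrict_apply measurableSet_Ico]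
  rw [tsum_eq_sum (s := Finset.range j)]
  · refine Finset.sum_congr rfl fun k hk => ?_
    have hsub : Ico ((2 : ℝ) ^ k) (2 ^ (k + 1)) ⊆ Icc 0 (2 ^ j) := fun u hu =>
      ⟨(pow_pos two_pos k).le.trans hu.1,
        hu.2.le.trans (pow_right_mono₀ one_le_two (Finset.mem_range.1 hk))⟩
    rw [inter_eq_self_of_subset_left hsub, Real.volume_Ico, pow_succ,
      show (2 : ℝ) ^ k * 2 - 2 ^ k = 2 ^ k by ring, ENNReal.ofReal_pow zero_le_two,
      ENNReal.ofReal_ofNat]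
  · intro k hk
    have hjk : j ≤ k := by simpa using hk
    have hsub : Ico ((2 : ℝ) ^ k) (2 ^ (k + 1)) ∩ Icc 0 (2 ^ j) ⊆ {2 ^ j} := fun u hu =>
      le_antisymm hu.2.2 ((pow_right_mono₀ one_le_two hjk).trans hu.1.1)
    rw [measure_mono_null hsub (Real.volume_singleton), mul_zero]

theorem lintegral_dyadicStep_comp {X : Type*} [MeasurableSpace X] (μ : Measure X) {ρ : X → ℝ}
    (hρ : Measurable ρ) :
    ∫⁻ x, dyadicStep c (ρ x) ∂μ = ∑' k, c k * μ (ρ ⁻¹' Ico (2 ^ k) (2 ^ (k + 1))) := by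
  have hAm (k : ℕ) : MeasurableSet (ρ ⁻¹' Ico ((2 : ℝ) ^ k) (2 ^ (k + 1))) :=
    hρ measurableSet_Ico
  calc ∫⁻ x, dyadicStep c (ρ x) ∂μ
      = ∫⁻ x, ∑' k, (ρ ⁻¹' Ico ((2 : ℝ) ^ k) (2 ^ (k + 1))).indicator (fun _ => c k) x ∂μ := rfl
    _ = _ := by
      rw [lintegral_tsum fun k => (measurable_const.indicator (hAm k)).aemeasurable]
      simp_rw [lintegral_indicator_const (hAm _)]

end DyadicStep

theorem exists_dist_eq_of_not_isBounded {X : Type*} [MetricSpace X] [ConnectedSpace X]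
    (hX : ¬ Bornology.IsBounded (univ : Set X)) (x₀ : X) {r : ℝ} (hr : 0 ≤ r) :
    ∃ y, dist x₀ y = r := by
  obtain ⟨z, hz⟩ : ∃ z, r ≤ dist x₀ z := by
    by_contra! h
    exact hX ((isBounded_iff_subset_ball x₀).2 ⟨r, fun z _ => mem_ball'.2 (h z)⟩)
  exact intermediate_value_univ x₀ z (continuous_const.dist continuous_id) ⟨by simpa using hr, hz⟩

section MetricMeasure

variable {X : Type*} [MetricSpace X] [MeasurableSpace X] (μ : Measure X)

theorem not_isBounded_univ_of_measure_univ_eq_top (hμ : μ univ = ⊤) (x₀ : X)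
    (hball : ∀ r, 0 < r → μ (ball x₀ r) ≠ ⊤) : ¬ Bornology.IsBounded (univ : Set X) := by
  intro hbdd
  obtain ⟨r, hr⟩ := (isBounded_iff_subset_ball x₀).1 hbdd
  exact hball r (pos_of_mem_ball (hr (mem_univ x₀))) (top_unique (hμ ▸ measure_mono hr))

variable {μ} {D : ℝ≥0∞} (hD : ∀ x r, 0 < r → μ (ball x (2 * r)) ≤ D * μ (ball x r))
include hD

theorem measure_ball_two_pow_mul_le (x : X) {r : ℝ} (hr : 0 < r) (n : ℕ) :
    μ (ball x (2 ^ n * r)) ≤ D ^ n * μ (ball x r) := by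
  induction n with
  | zero => simp
  | succ n ih =>
    calc μ (ball x (2 ^ (n + 1) * r)) = μ (ball x (2 * (2 ^ n * r))) := by ring_nf
      _ ≤ D * (D ^ n * μ (ball x r)) := (hD x _ (by positivity)).trans (mul_le_mul_right ih D)
      _ = D ^ (n + 1) * μ (ball x r) := by ring

/-- In a connected unbounded space, every annulus `R ≤ d(x₀, ·) < 2R` contains a ball of radius
`R / 2`, whose eightfold enlargement covers `B(x₀, 4R)`. -/
theorem measure_ball_le_mul_measure_annulus [ConnectedSpace X]
    (hX : ¬ Bornology.IsBounded (univ : Set X)) (x₀ : X) {R : ℝ} (hR : 0 < R) :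
    μ (ball x₀ (4 * R)) ≤ D ^ 4 * μ (dist x₀ ⁻¹' Ico R (2 * R)) := by
  obtain ⟨y, hy⟩ := exists_dist_eq_of_not_isBounded hX x₀ (by positivity : 0 ≤ 3 / 2 * R)
  have hcover : ball x₀ (4 * R) ⊆ ball y (2 ^ 4 * (R / 2)) := fun z hz => by
    have := dist_triangle y x₀ z
    rw [mem_ball'] at hz ⊢
    rw [dist_comm] at hy
    linarith
  have hinside : ball y (R / 2) ⊆ dist x₀ ⁻¹' Ico R (2 * R) := fun z hz => by
    have h₁ := dist_triangle x₀ y z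
    have h₂ := dist_triangle x₀ z y
    rw [mem_ball'] at hz
    rw [dist_comm z y] at h₂
    constructor <;> linarith
  calc μ (ball x₀ (4 * R)) ≤ μ (ball y (2 ^ 4 * (R / 2))) := measure_mono hcover
    _ ≤ D ^ 4 * μ (ball y (R / 2)) := measure_ball_two_pow_mul_le hD y (by positivity) 4
    _ ≤ D ^ 4 * μ (dist x₀ ⁻¹' Ico R (2 * R)) := mul_le_mul_right (measure_mono hinside) _

end MetricMeasure

theorem tsum_eq_top_of_eventually_const_le {a : ℕ → ℝ≥0∞} {ε : ℝ≥0∞} (hε : ε ≠ 0)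
    (h : ∀ᶠ j in atTop, ε ≤ a j) : ∑' j, a j = ⊤ := by
  by_contra hfin
  obtain ⟨j, hlt, hle⟩ := ((ENNReal.tendsto_atTop_zero_of_tsum_ne_top hfin).eventually
    (gt_mem_nhds (pos_iff_ne_zero.2 hε))).and h |>.exists
  exact hlt.not_ge hle

section Construction

variable {X : Type*} [MetricSpace X] [MeasurableSpace X] (μ : Measure X) (x₀ : X) (p : ℝ)

/-- `T j` of the sketch: the profile below falls short of its supremum `T 0` by `T j` at radius
`2 ^ j`. -/
noncomputable def deficit (j : ℕ) : ℝ := (μ (ball x₀ (2 ^ (j + 1)))).toReal ^ (-p⁻¹)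

noncomputable def dyadicSlope (k : ℕ) : ℝ≥0∞ :=
  ENNReal.ofReal ((deficit μ x₀ p k - deficit μ x₀ p (k + 1)) / 2 ^ k)

noncomputable def radialProfile (x : X) : ℝ :=
  lintegralPrimitive (dyadicStep (dyadicSlope μ x₀ p)) (dist x₀ x)

noncomputable def radialGradient (x : X) : ℝ≥0∞ :=
  dyadicStep (dyadicSlope μ x₀ p) (dist x₀ x)

variable {μ x₀}
variable (hball : ∀ r, 0 < r → 0 < μ (ball x₀ r) ∧ μ (ball x₀ r) < ⊤)
include hball

theorem deficit_pos (j : ℕ) : 0 < deficit μ x₀ p j :=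
  Real.rpow_pos_of_pos (ENNReal.toReal_pos (hball _ (by positivity)).1.ne'
    (hball _ (by positivity)).2.ne) _

theorem antitone_deficit (hp : 0 < p) : Antitone (deficit μ x₀ p) := fun i j hij =>
  Real.rpow_le_rpow_of_nonpos
    (ENNReal.toReal_pos (hball _ (by positivity)).1.ne' (hball _ (by positivity)).2.ne)
    (ENNReal.toReal_mono (hball _ (by positivity)).2.ne
      (measure_mono (ball_subset_ball (pow_right_mono₀ one_le_two (by omega)))))
    (by simpa using hp.le)

theorem ofReal_deficit_rpow (hp : 0 < p) (j : ℕ) :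
    ENNReal.ofReal (deficit μ x₀ p j) ^ p = (μ (ball x₀ (2 ^ (j + 1))))⁻¹ := by
  obtain ⟨hpos, hfin⟩ := hball (2 ^ (j + 1)) (by positivity)
  rw [ENNReal.ofReal_rpow_of_nonneg (deficit_pos p hball j).le hp.le, deficit,
    ← Real.rpow_mul ENNReal.toReal_nonneg, neg_mul, inv_mul_cancel₀ hp.ne', Real.rpow_neg_one,
    ENNReal.ofReal_inv_of_pos (ENNReal.toReal_pos hpos.ne' hfin.ne),
    ENNReal.ofReal_toReal hfin.ne]

theorem exists_deficit_le (hμ : μ univ = ⊤) (hp : 0 < p) {ε : ℝ} (hε : 0 < ε) :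
    ∃ n, deficit μ x₀ p n ≤ ε := by
  have hcover : ⋃ n : ℕ, ball x₀ ((2 : ℝ) ^ (n + 1)) = univ :=
    eq_univ_of_forall fun z => mem_iUnion.2 <|
      (pow_unbounded_of_one_lt (dist z x₀) one_lt_two).imp fun n hn =>
        hn.trans (pow_lt_pow_right₀ one_lt_two n.lt_succ_self)
  have hlim : Tendsto (fun n : ℕ => μ (ball x₀ (2 ^ (n + 1)))) atTop (𝓝 ⊤) := by
    have := tendsto_measure_iUnion_atTop (μ := μ) (s := fun n : ℕ => ball x₀ ((2 : ℝ) ^ (n + 1)))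
      fun i j hij => ball_subset_ball (pow_right_mono₀ one_le_two (by omega))
    rwa [hcover, hμ] at this
  have hεp : (ENNReal.ofReal ε ^ p)⁻¹ < ⊤ :=
    ENNReal.inv_lt_top.2 (ENNReal.rpow_pos (ENNReal.ofReal_pos.2 hε) ENNReal.ofReal_ne_top)
  obtain ⟨n, hn⟩ := (hlim.eventually (lt_mem_nhds hεp)).exists
  refine ⟨n, (ENNReal.ofReal_le_ofReal_iff hε.le).1 ((ENNReal.rpow_le_rpow_iff hp).1 ?_)⟩
  rw [ofReal_deficit_rpow p hball hp]
  exact ENNReal.inv_le_iff_inv_le.1 hn.le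

theorem dyadicSlope_le (hp : 0 < p) (k : ℕ) :
    dyadicSlope μ x₀ p k ≤ ENNReal.ofReal (deficit μ x₀ p 0) := by
  refine ENNReal.ofReal_le_ofReal ?_
  calc (deficit μ x₀ p k - deficit μ x₀ p (k + 1)) / 2 ^ k
      ≤ deficit μ x₀ p k - deficit μ x₀ p (k + 1) :=
        div_le_self (sub_nonneg.2 (antitone_deficit p hball hp k.le_succ)) (one_le_pow₀ one_le_two)
    _ ≤ deficit μ x₀ p 0 := by
        linarith [deficit_pos p hball (k + 1), antitone_deficit p hball hp k.zero_le]

theorem dyadicSlope_mul_two_pow (hp : 0 < p) (k : ℕ) :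
    dyadicSlope μ x₀ p k * 2 ^ k = ENNReal.ofReal (deficit μ x₀ p k - deficit μ x₀ p (k + 1)) := by
  rw [dyadicSlope, ← ENNReal.ofReal_ofNat 2, ← ENNReal.ofReal_pow zero_le_two,
    ← ENNReal.ofReal_mul (div_nonneg (sub_nonneg.2 (antitone_deficit p hball hp k.le_succ))
      (by positivity)), div_mul_cancel₀ _ (by positivity)]

theorem dyadicSlope_rpow_mul_le (hp : 0 < p) (k : ℕ) :
    dyadicSlope μ x₀ p k ^ p * μ (ball x₀ (2 ^ (k + 1))) ≤ ((2 : ℝ≥0∞) ^ p)⁻¹ ^ k := by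
  obtain ⟨hpos, hfin⟩ := hball (2 ^ (k + 1)) (by positivity)
  have hslope : dyadicSlope μ x₀ p k ≤ ENNReal.ofReal (deficit μ x₀ p k) * ((2 : ℝ≥0∞) ^ k)⁻¹ := by
    rw [dyadicSlope, ENNReal.ofReal_div_of_pos (by positivity), ENNReal.ofReal_pow zero_le_two,
      ENNReal.ofReal_ofNat, div_eq_mul_inv]
    gcongr
    linarith [deficit_pos p hball (k + 1)]
  calc dyadicSlope μ x₀ p k ^ p * μ (ball x₀ (2 ^ (k + 1)))
      ≤ (ENNReal.ofReal (deficit μ x₀ p k) * ((2 : ℝ≥0∞) ^ k)⁻¹) ^ p *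
          μ (ball x₀ (2 ^ (k + 1))) := by gcongr
    _ = ((2 : ℝ≥0∞) ^ p)⁻¹ ^ k := by
        rw [ENNReal.mul_rpow_of_nonneg _ _ hp.le, ofReal_deficit_rpow p hball hp, mul_right_comm,
          ENNReal.inv_mul_cancel hpos.ne' hfin.ne, one_mul, ENNReal.inv_rpow, ← ENNReal.inv_pow,
          ← ENNReal.rpow_natCast, ← ENNReal.rpow_mul, mul_comm, ENNReal.rpow_mul,
          ENNReal.rpow_natCast]

theorem lintegralPrimitive_two_pow (hp : 0 < p) (j : ℕ) :
    lintegralPrimitive (dyadicStep (dyadicSlope μ x₀ p)) (2 ^ j) =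
      deficit μ x₀ p 0 - deficit μ x₀ p j := by
  have hstep (k : ℕ) : 0 ≤ deficit μ x₀ p k - deficit μ x₀ p (k + 1) :=
    sub_nonneg.2 (antitone_deficit p hball hp k.le_succ)
  rw [lintegralPrimitive, setLIntegral_Icc_zero_two_pow_dyadicStep,
    Finset.sum_congr rfl fun k _ => dyadicSlope_mul_two_pow p hball hp k,
    ← ENNReal.ofReal_sum_of_nonneg fun k _ => hstep k, Finset.sum_range_sub',
    ENNReal.toReal_ofReal (sub_nonneg.2 (antitone_deficit p hball hp j.zero_le))]

end Construction

theorem measurable_radialGradient {X : Type*} [MetricSpace X] [MeasurableSpace X]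
    [OpensMeasurableSpace X] (μ : Measure X) (x₀ : X) (p : ℝ) :
    Measurable (radialGradient μ x₀ p) :=
  (measurable_dyadicStep _).comp (continuous_const.dist continuous_id).measurable

section RadialProfile

variable {X : Type*} [MetricSpace X] [MeasurableSpace X] {μ : Measure X} {x₀ : X} {p : ℝ}
  (hball : ∀ r, 0 < r → 0 < μ (ball x₀ r) ∧ μ (ball x₀ r) < ⊤) (hp : 0 < p)
include hball hp

theorem dyadicStep_dyadicSlope_le (u : ℝ) :
    dyadicStep (dyadicSlope μ x₀ p) u ≤ (deficit μ x₀ p 0).toNNReal :=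
  dyadicStep_le _ (dyadicSlope_le p hball hp) u

theorem radialProfile_mem_Icc {j : ℕ} {x : X}
    (hx : dist x₀ x ∈ Ico ((2 : ℝ) ^ j) (2 ^ (j + 1))) :
    radialProfile μ x₀ p x ∈
      Icc (deficit μ x₀ p 0 - deficit μ x₀ p j) (deficit μ x₀ p 0 - deficit μ x₀ p (j + 1)) := by
  have hmono := monotone_lintegralPrimitive (dyadicStep_dyadicSlope_le hball hp)
  rw [← lintegralPrimitive_two_pow p hball hp, ← lintegralPrimitive_two_pow p hball hp]
  exact ⟨hmono hx.1, hmono hx.2.le⟩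

/-- On the `j`-th annulus the profile is below `T 0` by at least `T (j + 1)`, and above any
`c < T 0` by at least `T j` once `T j ≤ (T 0 - c) / 2`. -/
theorem eventually_deficit_le_abs_radialProfile_sub (hμ : μ univ = ⊤) (c : ℝ) :
    ∀ᶠ j in atTop, ∀ x, dist x₀ x ∈ Ico ((2 : ℝ) ^ j) (2 ^ (j + 1)) →
      deficit μ x₀ p (j + 1) ≤ |radialProfile μ x₀ p x - c| := by
  rcases le_or_gt (deficit μ x₀ p 0) c with hc | hc
  · refine .of_forall fun j x hx => ?_
    have := (radialProfile_mem_Icc hball hp hx).2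
    rw [abs_sub_comm]
    exact (by linarith : deficit μ x₀ p (j + 1) ≤ c - radialProfile μ x₀ p x).trans
      (le_abs_self _)
  · obtain ⟨n, hn⟩ := exists_deficit_le p hball hμ hp (half_pos (sub_pos.2 hc))
    refine eventually_atTop.2 ⟨n, fun j hj x hx => ?_⟩
    have := (radialProfile_mem_Icc hball hp hx).1
    have hjn := antitone_deficit p hball hp hj
    have hj1 := antitone_deficit p hball hp j.le_succ
    exact (by linarith : deficit μ x₀ p (j + 1) ≤ radialProfile μ x₀ p x - c).trans
      (le_abs_self _)

theorem lipschitzWith_radialProfile :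
    LipschitzWith (deficit μ x₀ p 0).toNNReal (radialProfile μ x₀ p) := by
  have := (lipschitzWith_lintegralPrimitive (dyadicStep_dyadicSlope_le hball hp)).comp
    (LipschitzWith.dist_right x₀)
  rwa [mul_one] at this

theorem isUpperGradient_radialGradient :
    IsUpperGradient (radialGradient μ x₀ p) (radialProfile μ x₀ p) :=
  (isUpperGradient_lintegralPrimitive (dyadicStep_dyadicSlope_le hball hp)).comp_lipschitzWith
    (LipschitzWith.dist_right x₀)

variable [OpensMeasurableSpace X]

theorem lintegral_radialGradient_rpow_lt_top : ∫⁻ x, radialGradient μ x₀ p x ^ p ∂μ < ⊤ :=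
  calc ∫⁻ x, radialGradient μ x₀ p x ^ p ∂μ
      = ∫⁻ x, dyadicStep (fun k => dyadicSlope μ x₀ p k ^ p) (dist x₀ x) ∂μ := by
        simp_rw [radialGradient, dyadicStep_rpow _ hp]
    _ = ∑' k, dyadicSlope μ x₀ p k ^ p * μ (dist x₀ ⁻¹' Ico (2 ^ k) (2 ^ (k + 1))) :=
        lintegral_dyadicStep_comp _ μ (continuous_const.dist continuous_id).measurable
    _ ≤ ∑' k : ℕ, ((2 : ℝ≥0∞) ^ p)⁻¹ ^ k := ENNReal.tsum_le_tsum fun k =>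
        (mul_le_mul_right (measure_mono fun x hx => mem_ball'.2 hx.2) _).trans
          (dyadicSlope_rpow_mul_le p hball hp k)
    _ = (1 - ((2 : ℝ≥0∞) ^ p)⁻¹)⁻¹ := ENNReal.tsum_geometric _
    _ < ⊤ := ENNReal.inv_lt_top.2 (tsub_pos_iff_lt.2 (ENNReal.inv_lt_one.2
        (ENNReal.one_lt_rpow ENNReal.one_lt_two hp)))

end RadialProfile

section Divergence

open scoped Function

variable {X : Type*} [MetricSpace X] [MeasurableSpace X] [ConnectedSpace X]
  {μ : Measure X} {x₀ : X} {p : ℝ} (hμ : μ univ = ⊤)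
  (hball : ∀ r, 0 < r → 0 < μ (ball x₀ r) ∧ μ (ball x₀ r) < ⊤) (hp : 0 < p) {D : ℝ≥0}
  (hD : ∀ x r, 0 < r → μ (ball x (2 * r)) ≤ D * μ (ball x r))
include hμ hball hp hD

theorem inv_pow_four_le_ofReal_deficit_rpow_mul_measure (j : ℕ) :
    ((D : ℝ≥0∞) ^ 4)⁻¹ ≤
      ENNReal.ofReal (deficit μ x₀ p (j + 1)) ^ p * μ (dist x₀ ⁻¹' Ico (2 ^ j) (2 ^ (j + 1))) := by
  obtain ⟨hpos, hfin⟩ := hball (2 ^ (j + 2)) (by positivity)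
  have hX := not_isBounded_univ_of_measure_univ_eq_top μ hμ x₀ fun r hr => (hball r hr).2.ne
  have hann := measure_ball_le_mul_measure_annulus hD hX x₀ (pow_pos two_pos j)
  rw [← pow_succ', show (4 : ℝ) * 2 ^ j = 2 ^ (j + 2) by ring] at hann
  rw [ofReal_deficit_rpow p hball hp, ← ENNReal.div_eq_inv_mul,
    ENNReal.le_div_iff_mul_le (.inl hpos.ne') (.inl hfin.ne), ← ENNReal.div_eq_inv_mul]
  exact ENNReal.div_le_of_le_mul' hann

theorem lintegral_rpow_abs_radialProfile_sub_eq_top [OpensMeasurableSpace X] (c : ℝ) :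
    ∫⁻ x, ENNReal.ofReal |radialProfile μ x₀ p x - c| ^ p ∂μ = ⊤ := by
  set A : ℕ → Set X := fun j => dist x₀ ⁻¹' Ico (2 ^ j) (2 ^ (j + 1))
  have hAm (j : ℕ) : MeasurableSet (A j) :=
    (continuous_const.dist continuous_id).measurable measurableSet_Ico
  have hAd : Pairwise (Disjoint on A) := fun i j hij =>
    (pairwise_disjoint_Ico_two_pow hij).preimage _
  have hlow : ∀ᶠ j in atTop,
      ((D : ℝ≥0∞) ^ 4)⁻¹ ≤ ∫⁻ x in A j, ENNReal.ofReal |radialProfile μ x₀ p x - c| ^ p ∂μ := by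
    filter_upwards [eventually_deficit_le_abs_radialProfile_sub hball hp hμ c] with j hj
    calc ((D : ℝ≥0∞) ^ 4)⁻¹
        ≤ ENNReal.ofReal (deficit μ x₀ p (j + 1)) ^ p * μ (A j) :=
          inv_pow_four_le_ofReal_deficit_rpow_mul_measure hμ hball hp hD j
      _ = ∫⁻ _ in A j, ENNReal.ofReal (deficit μ x₀ p (j + 1)) ^ p ∂μ :=
          (setLIntegral_const _ _).symm
      _ ≤ ∫⁻ x in A j, ENNReal.ofReal |radialProfile μ x₀ p x - c| ^ p ∂μ :=
          setLIntegral_mono' (hAm j) fun x hx =>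
            ENNReal.rpow_le_rpow (ENNReal.ofReal_le_ofReal (hj x hx)) hp.le
  refine top_unique ?_
  calc ⊤ = ∑' j, ∫⁻ x in A j, ENNReal.ofReal |radialProfile μ x₀ p x - c| ^ p ∂μ :=
        (tsum_eq_top_of_eventually_const_le (by simp) hlow).symm
    _ = ∫⁻ x in ⋃ j, A j, ENNReal.ofReal |radialProfile μ x₀ p x - c| ^ p ∂μ :=
        (lintegral_iUnion hAm hAd _).symm
    _ ≤ ∫⁻ x, ENNReal.ofReal |radialProfile μ x₀ p x - c| ^ p ∂μ := setLIntegral_le_lintegral _ _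

end Divergence

theorem statement0_general {X : Type*} [MetricSpace X] [MeasurableSpace X] [BorelSpace X]
    [ConnectedSpace X]
    (μ : Measure X) (hXinf : μ Set.univ = ⊤)
    (hball : ∀ (x : X) (r : ℝ), 0 < r → 0 < μ (ball x r) ∧ μ (ball x r) < ⊤)
    (p : ℝ) (hp : 1 ≤ p)
    (hgeom : GloballyControlledGeometry p μ) :
    ∃ f : X → ℝ, LocallyLipschitz f ∧
      (∃ g : X → ℝ≥0∞, Measurable g ∧ IsUpperGradient g f ∧ (∫⁻ x, g x ^ p ∂μ) < ⊤) ∧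
      ∀ c : ℝ, (∫⁻ x, ENNReal.ofReal |f x - c| ^ p ∂μ) = ⊤ := by
  obtain ⟨Cd, -, -, -, -, -, hD, -⟩ := hgeom
  obtain ⟨x₀⟩ : Nonempty X := inferInstance
  have hp₀ : 0 < p := one_pos.trans_le hp
  exact ⟨radialProfile μ x₀ p, (lipschitzWith_radialProfile (hball x₀) hp₀).locallyLipschitz,
    ⟨radialGradient μ x₀ p, measurable_radialGradient μ x₀ p,
      isUpperGradient_radialGradient (hball x₀) hp₀,
      lintegral_radialGradient_rpow_lt_top (hball x₀) hp₀⟩,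
    lintegral_rpow_abs_radialProfile_sub_eq_top hXinf (hball x₀) hp₀ hD⟩

/-- if `(X,d,μ)` satisfies the standing assumptions and is of globally
`p`-controlled geometry, then there is a locally Lipschitz `f ∈ D^{1,p}(X)` with
`∫ |f - c|ᵖ dμ = ∞` for every `c ∈ ℝ`; in particular `D^{1,p}(X) ≠ N^{1,p}(X) + ℝ`. -/
theorem statement0 {X : Type*} [MetricSpace X] [MeasurableSpace X] [BorelSpace X]
    [ProperSpace X] [ConnectedSpace X]
    (μ : Measure X) (hXinf : μ Set.univ = ⊤)
    (hball : ∀ (x : X) (r : ℝ), 0 < r → 0 < μ (ball x r) ∧ μ (ball x r) < ⊤)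
    (p : ℝ) (hp : 1 ≤ p)
    (hgeom : GloballyControlledGeometry p μ) :
    ∃ f : X → ℝ, LocallyLipschitz f ∧
      (∃ g : X → ℝ≥0∞, Measurable g ∧ IsUpperGradient g f ∧ (∫⁻ x, g x ^ p ∂μ) < ⊤) ∧
      ∀ c : ℝ, (∫⁻ x, ENNReal.ofReal |f x - c| ^ p ∂μ) = ⊤ :=
  statement0_general μ hXinf hball p hp hgeom
end

section
/- Let 1 ≤ p < ∞ and let (X,d,μ) satisfy the standing assumptions. If X is p-parabolic, then D^{1,p}(X) ≠ N^{1,p}(X) + ℝ, i.e., there exists a measurable f : X → ℝ having an upper gradient g with ∫_X g^p dμ < ∞ such that ∫_X |f − c|^p dμ = ∞ for every c ∈ ℝ. -/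
open MeasureTheory Metric Set Filter
open scoped ENNReal NNReal Topology

/-- The relative `p`-capacity of the condenser `(E,F)`: the infimum of `∫ gᵖ dμ` over all
`p`-integrable measurable `u` with `u ≥ 1` on `E`, `u ≤ 0` on `F`, and all upper gradients
`g` of `u`. -/
noncomputable def relCap {X : Type*} [MetricSpace X] [MeasurableSpace X]
    (p : ℝ) (μ : Measure X) (E F : Set X) : ℝ≥0∞ :=
  ⨅ (u : X → ℝ) (g : X → ℝ≥0∞) (_ : Measurable u)
    (_ : (∫⁻ x, ENNReal.ofReal |u x| ^ p ∂μ) < ⊤)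
    (_ : ∀ x ∈ E, 1 ≤ u x) (_ : ∀ x ∈ F, u x ≤ 0)
    (_ : Measurable g) (_ : IsUpperGradient g u), ∫⁻ x, g x ^ p ∂μ

/-- `X` is `p`-parabolic: for every base ball, the relative `p`-capacity to the complement of
`B(x₀,R)` tends to `0` as `R → ∞`. -/
def IsPParabolic {X : Type*} [MetricSpace X] [MeasurableSpace X]
    (p : ℝ) (μ : Measure X) : Prop :=
  ∀ (x₀ : X) (r : ℝ), 0 < r →
    Tendsto (fun R : ℝ => relCap p μ (ball x₀ r) ((ball x₀ R)ᶜ)) atTop (𝓝 0)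

/-- `D^{1,p}(X) ≠ N^{1,p}(X) + ℝ`: there is a measurable function with a `p`-integrable upper
gradient such that `∫ |f - c|ᵖ dμ = ∞` for every constant `c`. -/
def DirichletNeNewtonPlusReal {X : Type*} [MetricSpace X] [MeasurableSpace X]
    (p : ℝ) (μ : Measure X) : Prop :=
  ∃ f : X → ℝ, Measurable f ∧
    (∃ g : X → ℝ≥0∞, Measurable g ∧ IsUpperGradient g f ∧ (∫⁻ x, g x ^ p ∂μ) < ⊤) ∧
    ∀ c : ℝ, (∫⁻ x, ENNReal.ofReal |f x - c| ^ p ∂μ) = ⊤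

/-!
Parabolicity yields, around any ball `B(x₀, r)`, a function `w ≥ 0` vanishing on that ball and
at least `1` off a larger ball, with an upper gradient of arbitrarily small `p`-energy. Chaining
such cutoffs along radii `R₀ < R₁ < ⋯ → ∞` with energies `δⱼ` of finite sum, the locally finite
sum `f = ∑ wⱼ` has the upper gradient `∑ gⱼ`, whose `Lᵖ` norm is at most `∑ δⱼ` by Minkowski,
and `f ≥ n` off `B(x₀, Rₙ)`. As balls have finite measure and `μ X = ∞`, the complement of every
ball has infinite measure, so `∫ |f - c|ᵖ = ∞` for every constant `c`.
-/

namespace IsUpperGradient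

variable {X : Type*} [MetricSpace X]

theorem comp_lipschitzWith_s1 {g : X → ℝ≥0∞} {u : X → ℝ} (hu : IsUpperGradient g u) {K : ℝ≥0}
    {φ : ℝ → ℝ} (hφ : LipschitzWith K φ) : IsUpperGradient (fun x => K * g x) (φ ∘ u) := by
  intro L γ hL hγ
  calc ENNReal.ofReal |φ (u (γ L)) - φ (u (γ 0))|
      ≤ ENNReal.ofReal (K * |u (γ L) - u (γ 0)|) := by
        gcongr
        simpa only [Real.dist_eq] using hφ.dist_le_mul _ _
    _ = K * ENNReal.ofReal |u (γ L) - u (γ 0)| := by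
        rw [ENNReal.ofReal_mul K.coe_nonneg, ENNReal.ofReal_coe_nnreal]
    _ ≤ K * ∫⁻ t in Icc 0 L, g (γ t) := by gcongr; exact hu L γ hL hγ
    _ = ∫⁻ t in Icc 0 L, K * g (γ t) := (lintegral_const_mul' _ _ ENNReal.coe_ne_top).symm

theorem finset_sum {ι : Type*} {g : ι → X → ℝ≥0∞} {u : ι → X → ℝ} (s : Finset ι)
    (hu : ∀ j ∈ s, IsUpperGradient (g j) (u j)) :
    IsUpperGradient (fun x => ∑ j ∈ s, g j x) (fun x => ∑ j ∈ s, u j x) := by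
  classical
  induction s using Finset.induction_on with
  | empty => intro L γ _ _; simp
  | insert i s hi ih =>
    intro L γ hL hγ
    have hs := ih fun j hj => hu j (Finset.mem_insert_of_mem hj)
    simp only [Finset.sum_insert hi]
    calc ENNReal.ofReal |u i (γ L) + ∑ j ∈ s, u j (γ L) - (u i (γ 0) + ∑ j ∈ s, u j (γ 0))|
        ≤ ENNReal.ofReal |u i (γ L) - u i (γ 0)|
          + ENNReal.ofReal |∑ j ∈ s, u j (γ L) - ∑ j ∈ s, u j (γ 0)| := by
          rw [← ENNReal.ofReal_add (abs_nonneg _) (abs_nonneg _)]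
          gcongr
          rw [add_sub_add_comm]
          exact abs_add_le _ _
      _ ≤ (∫⁻ t in Icc 0 L, g i (γ t)) + ∫⁻ t in Icc 0 L, ∑ j ∈ s, g j (γ t) :=
          add_le_add (hu i (Finset.mem_insert_self i s) L γ hL hγ) (hs L γ hL hγ)
      _ ≤ ∫⁻ t in Icc 0 L, (g i (γ t) + ∑ j ∈ s, g j (γ t)) := le_lintegral_add _ _

theorem tsum {ι : Type*} {g : ι → X → ℝ≥0∞} {u : ι → X → ℝ}
    (hu : ∀ j, IsUpperGradient (g j) (u j)) (hfin : ∀ x, (Function.support fun j => u j x).Finite) :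
    IsUpperGradient (fun x => ∑' j, g j x) (fun x => ∑' j, u j x) := by
  classical
  intro L γ hL hγ
  set s := (hfin (γ L)).toFinset ∪ (hfin (γ 0)).toFinset
  have hsum : ∀ x, (hfin x).toFinset ⊆ s → ∑' j, u j x = ∑ j ∈ s, u j x := fun x hx =>
    tsum_eq_sum fun j hj => by_contra fun h => hj (hx ((hfin x).mem_toFinset.mpr h))
  calc ENNReal.ofReal |∑' j, u j (γ L) - ∑' j, u j (γ 0)|
      = ENNReal.ofReal |∑ j ∈ s, u j (γ L) - ∑ j ∈ s, u j (γ 0)| := by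
        rw [hsum _ Finset.subset_union_left, hsum _ Finset.subset_union_right]
    _ ≤ ∫⁻ t in Icc 0 L, ∑ j ∈ s, g j (γ t) := finset_sum s (fun j _ => hu j) L γ hL hγ
    _ ≤ ∫⁻ t in Icc 0 L, ∑' j, g j (γ t) := lintegral_mono fun t => ENNReal.sum_le_tsum s

end IsUpperGradient

theorem eLpNorm'_tsum_le {α : Type*} [MeasurableSpace α] {μ : Measure α} {q : ℝ}
    {g : ℕ → α → ℝ≥0∞} (hg : ∀ j, AEMeasurable (g j) μ) (hq : 1 ≤ q) :
    eLpNorm' (fun x => ∑' j, g j x) q μ ≤ ∑' j, eLpNorm' (g j) q μ := by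
  have hq0 : 0 < q := zero_lt_one.trans_le hq
  have hpartial : ∀ n, eLpNorm' (fun x => ∑ j ∈ Finset.range n, g j x) q μ ≤
      ∑' j, eLpNorm' (g j) q μ := fun n =>
    calc eLpNorm' (fun x => ∑ j ∈ Finset.range n, g j x) q μ
        = eLpNorm' (∑ j ∈ Finset.range n, g j) q μ := by rw [Finset.sum_fn]
      _ ≤ ∑ j ∈ Finset.range n, eLpNorm' (g j) q μ :=
          eLpNorm'_sum_le (fun j _ => (hg j).aestronglyMeasurable) hq
      _ ≤ ∑' j, eLpNorm' (g j) q μ := ENNReal.sum_le_tsum _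
  have hlim : Tendsto (fun n => ∫⁻ x, (∑ j ∈ Finset.range n, g j x) ^ q ∂μ) atTop
      (𝓝 (∫⁻ x, (∑' j, g j x) ^ q ∂μ)) :=
    lintegral_tendsto_of_tendsto_of_monotone
      (fun n => (Finset.aemeasurable_fun_sum _ fun j _ => hg j).pow_const q)
      (ae_of_all _ fun x m n hmn => ENNReal.rpow_le_rpow
        (Finset.sum_le_sum_of_subset (Finset.range_subset_range.mpr hmn)) hq0.le)
      (ae_of_all _ fun x =>
        (ENNReal.continuous_rpow_const.tendsto _).comp (ENNReal.tendsto_nat_tsum _))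
  simp only [eLpNorm'_eq_lintegral_enorm, enorm_eq_self] at hpartial ⊢
  exact le_of_tendsto' ((ENNReal.continuous_rpow_const.tendsto _).comp hlim) hpartial

theorem measure_compl_eq_top {α : Type*} [MeasurableSpace α] {μ : Measure α} {s : Set α}
    (hμ : μ univ = ⊤) (hs : μ s ≠ ⊤) : μ sᶜ = ⊤ := by
  by_contra hsc
  exact ENNReal.add_ne_top.mpr ⟨hs, hsc⟩ (top_unique (hμ ▸ measure_univ_le_add_compl s))

theorem lintegral_rpow_abs_sub_eq_top {α : Type*} [MeasurableSpace α] {μ : Measure α}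
    {f : α → ℝ} {p : ℝ} (hp : 0 ≤ p)
    (hf : ∀ M : ℝ, ∃ s, MeasurableSet s ∧ μ s = ⊤ ∧ ∀ x ∈ s, M ≤ f x) (c : ℝ) :
    ∫⁻ x, ENNReal.ofReal |f x - c| ^ p ∂μ = ⊤ := by
  obtain ⟨s, hs, hμs, hfs⟩ := hf (c + 1)
  have hone : ∀ x ∈ s, 1 ≤ ENNReal.ofReal |f x - c| ^ p := fun x hx =>
    calc 1 = (1 : ℝ≥0∞) ^ p := (ENNReal.one_rpow p).symm
      _ ≤ ENNReal.ofReal |f x - c| ^ p := by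
        gcongr
        rw [← ENNReal.ofReal_one]
        exact ENNReal.ofReal_le_ofReal
          ((by linarith [hfs x hx] : (1 : ℝ) ≤ f x - c).trans (le_abs_self _))
  refine eq_top_iff.mpr ?_
  calc ⊤ = ∫⁻ _ in s, 1 ∂μ := by rw [setLIntegral_one, hμs]
    _ ≤ ∫⁻ x in s, ENNReal.ofReal |f x - c| ^ p ∂μ := setLIntegral_mono_ae' hs (ae_of_all _ hone)
    _ ≤ ∫⁻ x, ENNReal.ofReal |f x - c| ^ p ∂μ := setLIntegral_le_lintegral _ _

theorem exists_seq_of_forall_exists_add_one_le {P : ℕ → ℝ → ℝ → Prop}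
    (h : ∀ j r, ∃ R, r + 1 ≤ R ∧ P j r R) :
    ∃ R : ℕ → ℝ, Monotone R ∧ Tendsto R atTop atTop ∧ ∀ j, P j (R j) (R (j + 1)) := by
  choose next hnext using h
  let R : ℕ → ℝ := fun n => Nat.rec (motive := fun _ => ℝ) 0 next n
  have hstep : ∀ j, R j + 1 ≤ R (j + 1) := fun j => (hnext j (R j)).1
  have hge : ∀ j : ℕ, (j : ℝ) ≤ R j := by
    intro j
    induction j with
    | zero => simp [R]
    | succ j ih => push_cast; linarith [hstep j]
  exact ⟨R, monotone_nat_of_le_succ fun j => by linarith [hstep j],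
    tendsto_atTop_mono hge tendsto_natCast_atTop_atTop, fun j => (hnext j (R j)).2⟩

section Cutoffs

variable {X : Type*} [MetricSpace X] {x₀ : X} {R : ℕ → ℝ} {w : ℕ → X → ℝ}

theorem finite_support_of_eq_zero_on_ball (hR : Tendsto R atTop atTop)
    (hw : ∀ j, ∀ x ∈ ball x₀ (R j), w j x = 0) (x : X) :
    (Function.support fun j => w j x).Finite := by
  have h : ∀ᶠ j in atTop, w j x = 0 :=
    (hR.eventually_gt_atTop (dist x x₀)).mono fun j hj => hw j x (mem_ball.mpr hj)
  rwa [← Nat.cofinite_eq_atTop, eventually_cofinite] at h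

theorem natCast_le_tsum_of_notMem_ball (hR : Monotone R) (hw₀ : ∀ j x, 0 ≤ w j x)
    (hw₁ : ∀ j, ∀ x ∉ ball x₀ (R (j + 1)), 1 ≤ w j x) {x : X}
    (hsum : Summable fun j => w j x) {n : ℕ} (hx : x ∉ ball x₀ (R n)) :
    (n : ℝ) ≤ ∑' j, w j x :=
  calc (n : ℝ) = ∑ _j ∈ Finset.range n, (1 : ℝ) := by simp
    _ ≤ ∑ j ∈ Finset.range n, w j x := Finset.sum_le_sum fun j hj => hw₁ j x fun hxj =>
        hx (ball_subset_ball (hR (Finset.mem_range.mp hj)) hxj)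
    _ ≤ ∑' j, w j x := hsum.sum_le_tsum _ fun j _ => hw₀ j x

end Cutoffs

theorem IsPParabolic.exists_cutoff {X : Type*} [MetricSpace X] [MeasurableSpace X] {p : ℝ}
    {μ : Measure X} (h : IsPParabolic p μ) (hp : 0 < p) (x₀ : X) (r : ℝ) {ε : ℝ≥0∞}
    (hε : 0 < ε) :
    ∃ R, r + 1 ≤ R ∧ ∃ (w : X → ℝ) (g : X → ℝ≥0∞), Measurable w ∧ (∀ x, 0 ≤ w x) ∧
      (∀ x ∈ ball x₀ r, w x = 0) ∧ (∀ x ∉ ball x₀ R, 1 ≤ w x) ∧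
      Measurable g ∧ IsUpperGradient g w ∧ eLpNorm' g p μ < ε := by
  have hcap := (h x₀ (max r 1) (lt_max_of_lt_right one_pos)).eventually
    (gt_mem_nhds (ENNReal.rpow_pos_of_nonneg hε hp.le))
  obtain ⟨R, hR, hcapR⟩ := ((eventually_ge_atTop (r + 1)).and hcap).exists
  simp only [relCap, iInf_lt_iff] at hcapR
  obtain ⟨u, g, hu, -, hu₁, hu₀, hg, hug, hgε⟩ := hcapR
  have hφ : LipschitzWith 1 fun t : ℝ => max 0 (1 - t) := by
    simpa using ((LipschitzWith.const (1 : ℝ)).sub LipschitzWith.id).const_max 0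
  refine ⟨R, hR, fun x => max 0 (1 - u x), g, measurable_const.max (measurable_const.sub hu),
    fun x => le_max_left _ _, fun x hx => ?_, fun x hx => ?_, hg,
    by simpa [Function.comp_def] using hug.comp_lipschitzWith_s1 hφ, ?_⟩
  · have := hu₁ x (ball_subset_ball (le_max_left r 1) hx)
    exact max_eq_left (by linarith)
  · exact le_max_of_le_right (by linarith [hu₀ x hx])
  · rw [eLpNorm'_eq_lintegral_enorm, one_div]
    simp only [enorm_eq_self]
    exact (ENNReal.rpow_lt_rpow hgε (inv_pos.mpr hp)).trans_eq (ENNReal.rpow_rpow_inv hp.ne' ε)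

theorem statement1_general {X : Type*} [MetricSpace X] [MeasurableSpace X] [BorelSpace X]
    (μ : Measure X) (hXinf : μ Set.univ = ⊤)
    (hball : ∀ (x : X) (r : ℝ), 0 < r → 0 < μ (ball x r) ∧ μ (ball x r) < ⊤)
    (p : ℝ) (hp : 1 ≤ p)
    (hpara : IsPParabolic p μ) :
    DirichletNeNewtonPlusReal p μ := by
  have hp₀ : 0 < p := by linarith
  obtain ⟨x₀, -⟩ := nonempty_of_measure_ne_zero (hXinf.trans_ne ENNReal.top_ne_zero)
  obtain ⟨δ, hδ, hδsum⟩ := ENNReal.exists_pos_sum_of_countable' ENNReal.top_ne_zero ℕ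
  obtain ⟨R, hRmono, hRtop, hR⟩ := exists_seq_of_forall_exists_add_one_le
    fun j r => hpara.exists_cutoff hp₀ x₀ r (hδ j)
  choose w g hw hw₀ hw_in hw_out hg hug hgδ using hR
  have hfin := finite_support_of_eq_zero_on_ball hRtop hw_in
  have hsum : ∀ x, Summable fun j => w j x := fun x => summable_of_hasFiniteSupport (hfin x)
  have hG : eLpNorm' (fun x => ∑' j, g j x) p μ < ⊤ :=
    (eLpNorm'_tsum_le (fun j => (hg j).aemeasurable) hp).trans_lt
      ((ENNReal.tsum_le_tsum fun j => (hgδ j).le).trans_lt hδsum)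
  refine ⟨fun x => ∑' j, w j x, Measurable.tsum hw,
    ⟨fun x => ∑' j, g j x, Measurable.tsum hg, IsUpperGradient.tsum hug hfin,
      by simpa only [enorm_eq_self] using lintegral_rpow_enorm_lt_top_of_eLpNorm'_lt_top hp₀ hG⟩,
    lintegral_rpow_abs_sub_eq_top hp₀.le fun M => ?_⟩
  obtain ⟨n, hn, hRn⟩ := ((tendsto_natCast_atTop_atTop.eventually_ge_atTop M).and
    (hRtop.eventually_gt_atTop 0)).exists
  exact ⟨(ball x₀ (R n))ᶜ, measurableSet_ball.compl,
    measure_compl_eq_top hXinf (hball x₀ (R n) hRn).2.ne,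
    fun x hx => hn.trans (natCast_le_tsum_of_notMem_ball hRmono hw₀ hw_out (hsum x) hx)⟩

/-- under the standing assumptions, if `X` is `p`-parabolic then
`D^{1,p}(X) ≠ N^{1,p}(X) + ℝ`. -/
theorem statement1 {X : Type*} [MetricSpace X] [MeasurableSpace X] [BorelSpace X]
    [ProperSpace X] [ConnectedSpace X]
    (μ : Measure X) (hXinf : μ Set.univ = ⊤)
    (hball : ∀ (x : X) (r : ℝ), 0 < r → 0 < μ (ball x r) ∧ μ (ball x r) < ⊤)
    (p : ℝ) (hp : 1 ≤ p)
    (hpara : IsPParabolic p μ) :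
    DirichletNeNewtonPlusReal p μ :=
  statement1_general μ hXinf hball p hp hpara
end

section
/- Let (X,d,μ) satisfy the standing assumptions, suppose X is a length space, suppose there exist two ends at infinity of X that are not the same, and suppose there exists r > 0 with inf_{x∈X} μ(B(x,r)) > 0. Then for each 1 ≤ p < ∞, D^{1,p}(X) ≠ N^{1,p}(X) + ℝ. -/
open MeasureTheory Metric Set Filter
open scoped ENNReal NNReal Topology

/-- `X` is a length space: any two points can be joined, up to `ε`, by a `1`-Lipschitz curve
of length at most `d(x,y) + ε`. -/
def IsLengthSpace (X : Type*) [MetricSpace X] : Prop :=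
  ∀ x y : X, ∀ ε : ℝ, 0 < ε → ∃ L : ℝ, 0 ≤ L ∧ L ≤ dist x y + ε ∧
    ∃ γ : ℝ → X, LipschitzOnWith 1 γ (Set.Icc 0 L) ∧ γ 0 = x ∧ γ L = y

/-- `(F_j)` is an end at infinity of `X`: the closures are nested, consecutive complements are
at positive distance, the intersection is empty, and each `F_j` is an unbounded connected
component of the complement of some compact set. -/
def IsEndAtInfinity {X : Type*} [MetricSpace X] (F : ℕ → Set X) : Prop :=
  (∀ j, closure (F (j + 1)) ⊆ F j) ∧
  (∀ j, ∃ ε : ℝ, 0 < ε ∧ ∀ x ∈ (F j)ᶜ, ∀ y ∈ F (j + 1), ε ≤ dist x y) ∧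
  (⋂ j, F j) = ∅ ∧
  (∀ j, ∃ K : Set X, IsCompact K ∧ ¬ Bornology.IsBounded (F j) ∧
    ∃ x ∈ F j, F j = connectedComponentIn Kᶜ x)

/-- Two ends are the same if each is eventually contained in the other. -/
def SameEnd {X : Type*} (E F : ℕ → Set X) : Prop :=
  ∀ j, (∃ i, E i ⊆ F j) ∧ (∃ k, F k ⊆ E j)

open Bornology Function

/-!
Choose `j` so that one end does not eventually lie in `U := F j`, a component of `X ∖ K` with
`K ⊆ closedBall o M` compact; then `X ∖ U` contains an unbounded tail of the other end. In a
length space a curve from `x ∉ U` into `U` must cross `K`, so `dist x o - M ≤ infDist x U` off `U`.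
Hence the cutoff `u = max 0 (1 - infDist · U / R)` is `R⁻¹`-Lipschitz and takes only the values
`0`, `1` outside the ball `B = closedBall o (M + R)`; along a curve `γ`, `(u ∘ γ)'` vanishes
where `γ ∉ B`, so the fundamental theorem of calculus for Lipschitz functions makes `R⁻¹ • 1_B` an
upper gradient, which is `p`-integrable. But `u ≥ 3/4` on infinitely many disjoint `r`-balls
centred in `U` and `u = 0` on infinitely many centred far out in `X ∖ U`; these balls have
measure `≥ a`, so `∫ |u - c|ᵖ = ∞` whether `c ≤ 1/2` or `c > 1/2`.
-/

theorem ofReal_abs_sub_le_setLIntegral_of_abs_deriv_le {h : ℝ → ℝ} {a b : ℝ} (hab : a ≤ b)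
    (hh : AbsolutelyContinuousOnInterval h a b) {G : ℝ → ℝ≥0∞}
    (hG : ∀ t ∈ Ioo a b, ENNReal.ofReal |deriv h t| ≤ G t) :
    ENNReal.ofReal |h b - h a| ≤ ∫⁻ t in Icc a b, G t := by
  rw [← hh.integral_deriv_eq_sub, intervalIntegral.integral_of_le hab,
    ← Real.enorm_eq_ofReal_abs]
  calc ‖∫ t in Ioc a b, deriv h t‖ₑ ≤ ∫⁻ t in Ioc a b, ‖deriv h t‖ₑ :=
        enorm_integral_le_lintegral_enorm _
    _ = ∫⁻ t in Ioo a b, ENNReal.ofReal |deriv h t| := by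
        simp only [Real.enorm_eq_ofReal_abs, Measure.restrict_congr_set Ioo_ae_eq_Ioc]
    _ ≤ ∫⁻ t in Ioo a b, G t := setLIntegral_mono' measurableSet_Ioo hG
    _ ≤ ∫⁻ t in Icc a b, G t := lintegral_mono_set Ioo_subset_Icc_self

theorem isUpperGradient_indicator_of_eventually_eq {X : Type*} [MetricSpace X] {f : X → ℝ}
    {K : ℝ≥0} (hf : LipschitzWith K f) {Z : Set X}
    (hZ : ∀ x ∉ Z, ∀ᶠ y in 𝓝 x, f y = f x) :
    IsUpperGradient (Z.indicator fun _ => (K : ℝ≥0∞)) f := by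
  intro L γ hL hγ
  have hfγ : LipschitzOnWith K (f ∘ γ) (Icc 0 L) := by
    simpa using hf.comp_lipschitzOnWith hγ
  refine ofReal_abs_sub_le_setLIntegral_of_abs_deriv_le hL
    (uIcc_of_le hL ▸ hfγ).absolutelyContinuousOnInterval (fun t ht => ?_)
  have hnhds : Icc 0 L ∈ 𝓝 t := Icc_mem_nhds ht.1 ht.2
  by_cases htZ : γ t ∈ Z
  · rw [indicator_of_mem htZ, ← Real.norm_eq_abs, ← ENNReal.ofReal_coe_nnreal]
    exact ENNReal.ofReal_le_ofReal (norm_deriv_le_of_lipschitzOn hnhds hfγ)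
  · have hconst : f ∘ γ =ᶠ[𝓝 t] fun _ => f (γ t) :=
      ((hγ.continuousOn.continuousAt hnhds).eventually (hZ _ htZ))
    simp [hconst.deriv_eq]

theorem eventually_eq_of_continuous_of_eq_zero_or_one {X : Type*} [TopologicalSpace X]
    {f : X → ℝ} (hf : Continuous f) {Z : Set X} (hZ : IsClosed Z)
    (h01 : ∀ x ∉ Z, f x = 0 ∨ f x = 1) : ∀ x ∉ Z, ∀ᶠ y in 𝓝 x, f y = f x := by
  intro x hx
  filter_upwards [hZ.isOpen_compl.mem_nhds hx,
    hf.continuousAt.eventually (ball_mem_nhds (f x) one_pos)] with y hy hfy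
  rw [Real.dist_eq] at hfy
  rcases h01 x hx with hx' | hx' <;> rcases h01 y hy with hy' | hy' <;>
    simp only [hx', hy'] at hfy ⊢ <;> norm_num at hfy

theorem exists_seq_mem_pairwise_le_dist {X : Type*} [MetricSpace X] {S : Set X}
    (hS : ¬IsBounded S) {s : ℝ} (hs : 0 ≤ s) :
    ∃ y : ℕ → X, (∀ n, y n ∈ S) ∧ Pairwise fun i j => s ≤ dist (y i) (y j) := by
  obtain ⟨w, -⟩ := nonempty_of_not_isBounded hS
  have hstep : ∀ x, ∃ y ∈ S, dist w x + s ≤ dist w y := by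
    by_contra! h
    obtain ⟨x, hx⟩ := h
    exact hS (isBounded_ball.subset fun y hy => mem_ball'.2 (hx y hy))
  choose next hnextS hnext using hstep
  set y : ℕ → X := fun n => next (next^[n] w)
  have hsucc : ∀ n, dist w (y n) + s ≤ dist w (y (n + 1)) := fun n => by
    simpa only [y, iterate_succ_apply'] using hnext (y n)
  have hmono : Monotone fun n => dist w (y n) :=
    monotone_nat_of_le_succ fun n => by linarith [hsucc n]
  have hlt : ∀ i j, i < j → s ≤ dist (y i) (y j) := fun i j hij => by
    have := hmono (Nat.succ_le_of_lt hij)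
    linarith [hsucc i, dist_triangle w (y i) (y j)]
  refine ⟨y, fun n => hnextS _, fun i j hij => ?_⟩
  rcases hij.lt_or_gt with h | h
  · exact hlt i j h
  · exact dist_comm (y j) (y i) ▸ hlt j i h

theorem lintegral_eq_top_of_le_on_separated_balls {X : Type*} [MetricSpace X]
    [MeasurableSpace X] [OpensMeasurableSpace X] {μ : Measure X} {w : ℕ → X} {r : ℝ}
    (hw : Pairwise fun i j => 2 * r ≤ dist (w i) (w j)) {a : ℝ≥0∞} (ha : a ≠ 0)
    (hμ : ∀ n, a ≤ μ (ball (w n) r)) {φ : X → ℝ≥0∞} {δ : ℝ≥0∞} (hδ : δ ≠ 0)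
    (hφ : ∀ n, ∀ x ∈ ball (w n) r, δ ≤ φ x) :
    ∫⁻ x, φ x ∂μ = ⊤ := by
  set S := ⋃ n, ball (w n) r
  have hdisj : Pairwise (Disjoint on fun n => ball (w n) r) := fun i j hij =>
    ball_disjoint_ball (by linarith [hw hij])
  refine top_le_iff.1 ?_
  calc ⊤ = δ * ∑' _ : ℕ, a := by
        rw [ENNReal.tsum_const_eq_top_of_ne_zero ha, ENNReal.mul_top hδ]
    _ ≤ δ * μ S := by
        rw [measure_iUnion hdisj fun _ => measurableSet_ball]
        gcongr with n
        exact hμ n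
    _ = ∫⁻ x, S.indicator (fun _ => δ) x ∂μ :=
        (lintegral_indicator_const (MeasurableSet.iUnion fun _ => measurableSet_ball) δ).symm
    _ ≤ ∫⁻ x, φ x ∂μ := lintegral_mono <| indicator_le fun x hx => by
        obtain ⟨n, hn⟩ := mem_iUnion.1 hx
        exact hφ n x hn

theorem lintegral_indicator_const_rpow_lt_top {X : Type*} [MeasurableSpace X] {μ : Measure X}
    {s : Set X} (hs : MeasurableSet s) (hμs : μ s < ⊤) (c : ℝ≥0) {p : ℝ} (hp : 0 < p) :
    ∫⁻ x, s.indicator (fun _ => (c : ℝ≥0∞)) x ^ p ∂μ < ⊤ := by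
  have hpow : (fun x => s.indicator (fun _ => (c : ℝ≥0∞)) x ^ p)
      = s.indicator fun _ => (c : ℝ≥0∞) ^ p := by
    funext x
    by_cases hx : x ∈ s <;> simp [hx, ENNReal.zero_rpow_of_pos hp]
  rw [hpow, lintegral_indicator_const hs]
  exact ENNReal.mul_lt_top (ENNReal.rpow_lt_top_of_nonneg hp.le ENNReal.coe_ne_top) hμs

theorem IsLengthSpace.exists_mem_dist_le_add {X : Type*} [MetricSpace X]
    (hlen : IsLengthSpace X) {K : Set X} {x y u : X} (hu : u ∈ connectedComponentIn Kᶜ y)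
    (hx : x ∉ connectedComponentIn Kᶜ y) {ε : ℝ} (hε : 0 < ε) :
    ∃ k ∈ K, dist x k ≤ dist x u + ε := by
  obtain ⟨L, hL, hLle, γ, hγ, rfl, rfl⟩ := hlen x u ε hε
  by_contra! hK
  have hγK : γ '' Icc 0 L ⊆ Kᶜ := by
    rintro _ ⟨s, hs, rfl⟩ hsK
    have : dist (γ 0) (γ s) ≤ s := by
      simpa [Real.dist_eq, abs_of_nonneg hs.1] using
        hγ.dist_le_mul 0 (left_mem_Icc.2 hL) s hs
    exact (hK _ hsK).not_ge (by linarith [hs.2])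
  have hsub : γ '' Icc 0 L ⊆ connectedComponentIn Kᶜ (γ L) :=
    (isPreconnected_Icc.image _ hγ.continuousOn).subset_connectedComponentIn
      ⟨L, right_mem_Icc.2 hL, rfl⟩ hγK
  rw [← connectedComponentIn_eq hu] at hsub
  exact hx (hsub ⟨0, left_mem_Icc.2 hL, rfl⟩)

theorem IsLengthSpace.dist_sub_le_infDist {X : Type*} [MetricSpace X]
    (hlen : IsLengthSpace X) {K : Set X} {o : X} {M : ℝ} (hK : K ⊆ closedBall o M) {x y : X}
    (hy : y ∉ K) (hx : x ∉ connectedComponentIn Kᶜ y) :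
    dist x o - M ≤ infDist x (connectedComponentIn Kᶜ y) := by
  refine (le_infDist ⟨y, mem_connectedComponentIn hy⟩).2 fun u hu => ?_
  refine le_of_forall_pos_le_add fun ε hε => ?_
  obtain ⟨k, hk, hxk⟩ := hlen.exists_mem_dist_le_add hu hx hε
  linarith [dist_triangle x k o, mem_closedBall.1 (hK hk)]

noncomputable def cutoff {X : Type*} [MetricSpace X] (U : Set X) (R : ℝ) (x : X) : ℝ :=
  max 0 (1 - infDist x U / R)

section Cutoff

variable {X : Type*} [MetricSpace X] {U : Set X} {R : ℝ}

theorem cutoff_eq_one_of_mem {x : X} (hx : x ∈ U) : cutoff U R x = 1 := by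
  simp [cutoff, infDist_zero_of_mem hx]

theorem cutoff_eq_zero_of_le_infDist (hR : 0 < R) {x : X} (hx : R ≤ infDist x U) :
    cutoff U R x = 0 :=
  max_eq_left (by linarith [(one_le_div hR).2 hx])

theorem one_sub_infDist_div_le_cutoff (x : X) : 1 - infDist x U / R ≤ cutoff U R x :=
  le_max_right _ _

theorem lipschitzWith_cutoff (hR : 0 < R) : LipschitzWith R⁻¹.toNNReal (cutoff U R) := by
  refine LipschitzWith.of_dist_le_mul fun x y => ?_
  rw [Real.coe_toNNReal _ (inv_nonneg.2 hR.le), Real.dist_eq, cutoff, cutoff, max_comm 0,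
    max_comm 0]
  calc |max (1 - infDist x U / R) 0 - max (1 - infDist y U / R) 0|
      ≤ |(1 - infDist x U / R) - (1 - infDist y U / R)| := abs_max_sub_max_le_abs _ _ _
    _ = R⁻¹ * |infDist x U - infDist y U| := by
        rw [show 1 - infDist x U / R - (1 - infDist y U / R)
          = R⁻¹ * (infDist y U - infDist x U) by ring, abs_mul, abs_of_pos (inv_pos.2 hR),
          abs_sub_comm]
    _ ≤ R⁻¹ * dist x y := by
        gcongr
        simpa [Real.dist_eq] using (lipschitz_infDist_pt U).dist_le_mul x y

end Cutoff

theorem dirichletNeNewtonPlusReal_of_infDist_ge {X : Type*} [MetricSpace X]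
    [MeasurableSpace X] [BorelSpace X] (μ : Measure X)
    (hμfin : ∀ (x : X) (ρ : ℝ), 0 < ρ → μ (ball x ρ) < ⊤) {U : Set X} (hU : ¬IsBounded U)
    (hUc : ¬IsBounded Uᶜ) {o : X} {M : ℝ} (hfar : ∀ x ∉ U, dist x o - M ≤ infDist x U)
    {r : ℝ} (hr : 0 < r) {a : ℝ≥0∞} (ha : a ≠ 0) (hμ : ∀ x, a ≤ μ (ball x r))
    {p : ℝ} (hp : 0 < p) : DirichletNeNewtonPlusReal p μ := by
  set R := 4 * r
  have hR : 0 < R := by positivity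
  set Z := closedBall o (M + R)
  have h01 : ∀ x ∉ Z, cutoff U R x = 0 ∨ cutoff U R x = 1 := by
    intro x hx
    by_cases hxU : x ∈ U
    · exact Or.inr (cutoff_eq_one_of_mem hxU)
    · refine Or.inl (cutoff_eq_zero_of_le_infDist hR ?_)
      linarith [hfar x hxU, mem_closedBall.not.1 hx]
  have hcont := (lipschitzWith_cutoff (U := U) hR).continuous
  have hμZ : μ Z < ⊤ :=
    (measure_mono (closedBall_subset_ball ((le_abs_self _).trans_lt (lt_add_one _)))).trans_lt
      (hμfin o _ (by positivity))
  refine ⟨cutoff U R, hcont.measurable, ⟨Z.indicator fun _ => (R⁻¹.toNNReal : ℝ≥0∞),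
    measurable_const.indicator measurableSet_closedBall,
    isUpperGradient_indicator_of_eventually_eq (lipschitzWith_cutoff hR)
      (eventually_eq_of_continuous_of_eq_zero_or_one hcont isClosed_closedBall h01),
    lintegral_indicator_const_rpow_lt_top measurableSet_closedBall hμZ _ hp⟩, fun c => ?_⟩
  suffices ∃ w : ℕ → X, (Pairwise fun i j => 2 * r ≤ dist (w i) (w j)) ∧
      ∀ n, ∀ x ∈ ball (w n) r, 1 / 4 ≤ |cutoff U R x - c| by
    obtain ⟨w, hw, hlow⟩ := this
    exact lintegral_eq_top_of_le_on_separated_balls hw ha (fun n => hμ _)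
      (ENNReal.rpow_pos (by norm_num) ENNReal.ofReal_ne_top).ne'
      fun n x hx => ENNReal.rpow_le_rpow (ENNReal.ofReal_le_ofReal (hlow n x hx)) hp.le
  rcases le_or_gt c (1 / 2) with hc | hc
  · obtain ⟨y, hyU, hy⟩ := exists_seq_mem_pairwise_le_dist hU (by positivity : 0 ≤ 2 * r)
    refine ⟨y, hy, fun n x hx => ?_⟩
    have hxU : infDist x U < r := (infDist_le_dist_of_mem (hyU n)).trans_lt (mem_ball.1 hx)
    have : infDist x U / R < 1 / 4 := by rw [div_lt_iff₀ hR]; linarith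
    linarith [one_sub_infDist_div_le_cutoff (U := U) (R := R) x, le_abs_self (cutoff U R x - c)]
  · have hfarU : ¬IsBounded (Uᶜ \ closedBall o (M + R + r)) := fun hb =>
      hUc ((hb.union isBounded_closedBall).subset (subset_sdiff_union _ _))
    obtain ⟨z, hz, hzs⟩ := exists_seq_mem_pairwise_le_dist hfarU (by positivity : 0 ≤ 2 * r)
    refine ⟨z, hzs, fun n x hx => ?_⟩
    have hzU : R + r < infDist (z n) U := by
      linarith [hfar _ (hz n).1, mem_closedBall.not.1 (hz n).2]
    have hxU : R ≤ infDist x U := by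
      linarith [infDist_le_infDist_add_dist (x := z n) (y := x) (s := U), mem_ball'.1 hx]
    rw [cutoff_eq_zero_of_le_infDist hR hxU, zero_sub, abs_neg, abs_of_pos (by linarith)]
    linarith

namespace IsEndAtInfinity

variable {X : Type*} [MetricSpace X] {F : ℕ → Set X}

theorem isPreconnected (hF : IsEndAtInfinity F) (k : ℕ) : IsPreconnected (F k) := by
  obtain ⟨K, -, -, x, -, hFk⟩ := hF.2.2.2 k
  exact hFk ▸ isPreconnected_connectedComponentIn

theorem exists_disjoint_of_isCompact (hF : IsEndAtInfinity F) {K : Set X} (hK : IsCompact K) :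
    ∃ k, Disjoint (F k) K := by
  have hanti : Antitone fun n => closure (F (n + 1)) :=
    antitone_nat_of_succ_le fun n => (hF.1 (n + 1)).trans subset_closure
  have hcover : K ⊆ ⋃ n, (closure (F (n + 1)))ᶜ := by
    rw [← compl_iInter]
    refine fun x _ hx => ?_
    rw [← mem_empty_iff_false x, ← hF.2.2.1]
    exact mem_iInter.2 fun n => hF.1 n (mem_iInter.1 hx n)
  obtain ⟨n, hn⟩ := hK.elim_directed_cover _ (fun _ => isClosed_closure.isOpen_compl) hcover
    (compl_anti.comp hanti).directed_le
  exact ⟨n + 1, (subset_compl_iff_disjoint_right.1 hn).symm.mono_left subset_closure⟩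

theorem exists_connectedComponentIn_not_isBounded_compl {E : ℕ → Set X}
    (hE : IsEndAtInfinity E) (hF : IsEndAtInfinity F) {j : ℕ} (h : ∀ k, ¬F k ⊆ E j) :
    ∃ K, IsCompact K ∧ ∃ x ∉ K, E j = connectedComponentIn Kᶜ x ∧ ¬IsBounded (E j) ∧
      ¬IsBounded (E j)ᶜ := by
  obtain ⟨K, hK, hunb, x, hx, hEj⟩ := hE.2.2.2 j
  obtain ⟨k, hk⟩ := hF.exists_disjoint_of_isCompact hK
  have hFk : F k ⊆ (E j)ᶜ := fun z hzF hzE => h k <| by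
    rw [hEj, connectedComponentIn_eq (hEj ▸ hzE)]
    exact (hF.isPreconnected k).subset_connectedComponentIn hzF hk.subset_compl_right
  refine ⟨K, hK, x, connectedComponentIn_subset _ _ (hEj ▸ hx), hEj, hunb, fun hb => ?_⟩
  obtain ⟨K', -, hunb', -⟩ := hF.2.2.2 k
  exact hunb' (hb.subset hFk)

end IsEndAtInfinity

theorem statement2_general {X : Type*} [MetricSpace X] [MeasurableSpace X] [BorelSpace X]
    (μ : Measure X)
    (hball : ∀ (x : X) (r : ℝ), 0 < r → 0 < μ (ball x r) ∧ μ (ball x r) < ⊤)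
    (hlen : IsLengthSpace X)
    (F G : ℕ → Set X) (hF : IsEndAtInfinity F) (hG : IsEndAtInfinity G)
    (hFG : ¬ SameEnd F G)
    (hinf : ∃ r : ℝ, 0 < r ∧ ∃ a : ℝ≥0∞, 0 < a ∧ ∀ x : X, a ≤ μ (ball x r))
    (p : ℝ) (hp : 1 ≤ p) :
    DirichletNeNewtonPlusReal p μ := by
  obtain ⟨r, hr, a, ha, hμ⟩ := hinf
  obtain ⟨j, hj⟩ : ∃ j, (∀ i, ¬F i ⊆ G j) ∨ ∀ k, ¬G k ⊆ F j := by
    simpa only [SameEnd, not_forall, not_and_or, not_exists] using hFG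
  have key : ∀ {E E' : ℕ → Set X}, IsEndAtInfinity E → IsEndAtInfinity E' →
      (∀ k, ¬E' k ⊆ E j) → DirichletNeNewtonPlusReal p μ := by
    intro E E' hE hE' h
    obtain ⟨K, hK, x, hx, hEj, hunb, hunbc⟩ :=
      hE.exists_connectedComponentIn_not_isBounded_compl hE' h
    obtain ⟨M, hM⟩ := hK.isBounded.subset_closedBall x
    exact dirichletNeNewtonPlusReal_of_infDist_ge μ (fun y ρ hρ => (hball y ρ hρ).2) hunb
      hunbc (fun y hy => hEj ▸ hlen.dist_sub_le_infDist hM hx (hEj ▸ hy)) hr ha.ne' hμ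
      (by linarith)
  rcases hj with h | h
  · exact key hG hF h
  · exact key hF hG h

/-- under the standing assumptions, if `X` is a length space with two ends at
infinity that are not the same, and `inf_x μ(B(x,r)) > 0` for some `r > 0`, then for each
`1 ≤ p < ∞` one has `D^{1,p}(X) ≠ N^{1,p}(X) + ℝ`. -/
theorem statement2 {X : Type*} [MetricSpace X] [MeasurableSpace X] [BorelSpace X]
    [ProperSpace X] [ConnectedSpace X]
    (μ : Measure X) (hXinf : μ Set.univ = ⊤)
    (hball : ∀ (x : X) (r : ℝ), 0 < r → 0 < μ (ball x r) ∧ μ (ball x r) < ⊤)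
    (hlen : IsLengthSpace X)
    (F G : ℕ → Set X) (hF : IsEndAtInfinity F) (hG : IsEndAtInfinity G)
    (hFG : ¬ SameEnd F G)
    (hinf : ∃ r : ℝ, 0 < r ∧ ∃ a : ℝ≥0∞, 0 < a ∧ ∀ x : X, a ≤ μ (ball x r))
    (p : ℝ) (hp : 1 ≤ p) :
    DirichletNeNewtonPlusReal p μ :=
  statement2_general μ hball hlen F G hF hG hFG hinf p hp
end

section
/- Let (X,d,μ) satisfy the standing assumptions and suppose μ is Ahlfors s-regular for some s > 0. Then for all p, q ∈ [1,∞) with 1/q + 1/s ≠ 1/p there exists a measurable function f : X → ℝ with |f|^p locally integrable, such that ∫_X (lip f)^p dμ < ∞ while ∫_X |f − c|^q dμ = ∞ for every c ∈ ℝ. -/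
/-!
Fix `x₀`, write `r = dist x x₀` and put `α = -s/q`, so that `(r^α)^q = r^(-s)`. Ahlfors
regularity makes `∫ r^(-s)` over every annulus of a fixed ratio `K` bounded below, hence
infinite both near `x₀` and near infinity, while a dyadic decomposition shows that `r^β` is
integrable near infinity when `β + s < 0` and near `x₀` when `0 < β + s`.

If `1/p < 1/q + 1/s`, i.e. `(α - 1) p + s < 0`, the bounded function `f = max(r, 1)^α` works:
`lip f ≲ r^(α-1)` on `r ≥ 1` and `lip f = 0` on `r < 1`, while `|f - c| ≳ r^α` for large `r`.
If `1/p > 1/q + 1/s`, the function `f = min(r, 1)^α`, singular at `x₀`, works symmetrically.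
-/

open MeasureTheory Metric Set Filter
open scoped ENNReal NNReal Topology

/-- The pointwise Lipschitz constant `(lip f)(x) = limsup_{y → x, y ≠ x} |f y - f x| / d(y,x)`,
valued in `[0,∞]`. -/
noncomputable def lipConst {X : Type*} [MetricSpace X] (f : X → ℝ) (x : X) : ℝ≥0∞ :=
  Filter.limsup (fun y => ENNReal.ofReal (|f y - f x| / dist y x)) (nhdsWithin x {x}ᶜ)

/-- `μ` is Ahlfors `s`-regular: `C⁻¹ rˢ ≤ μ(B(x,r)) ≤ C rˢ` for all `x` and `r > 0`. -/
def AhlforsRegular {X : Type*} [MetricSpace X] [MeasurableSpace X]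
    (s : ℝ) (μ : Measure X) : Prop :=
  ∃ C : ℝ, 1 ≤ C ∧ ∀ (x : X) (r : ℝ), 0 < r →
    ENNReal.ofReal (r ^ s / C) ≤ μ (ball x r) ∧ μ (ball x r) ≤ ENNReal.ofReal (C * r ^ s)

open scoped Function

theorem abs_rpow_sub_rpow_le_of_neg {α m t u : ℝ} (hα : α < 0) (hm : 0 < m) (ht : m ≤ t)
    (hu : m ≤ u) : |t ^ α - u ^ α| ≤ -α * m ^ (α - 1) * |t - u| := by
  have hderiv : ∀ z ∈ Ici m, HasDerivWithinAt (· ^ α) (α * z ^ (α - 1)) (Ici m) z :=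
    fun z hz => (Real.hasDerivAt_rpow_const (Or.inl (hm.trans_le hz).ne')).hasDerivWithinAt
  have hbound : ∀ z ∈ Ici m, ‖α * z ^ (α - 1)‖ ≤ -α * m ^ (α - 1) := fun z hz => by
    rw [Real.norm_eq_abs, abs_mul, abs_of_neg hα,
      abs_of_pos (Real.rpow_pos_of_pos (hm.trans_le hz) _)]
    exact mul_le_mul_of_nonneg_left (Real.rpow_le_rpow_of_nonpos hm hz (by linarith)) (by linarith)
  simpa only [Real.norm_eq_abs] using
    (convex_Ici m).norm_image_sub_le_of_norm_hasDerivWithin_le hderiv hbound hu ht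

section LipConst

variable {X : Type*} [MetricSpace X]

theorem lipConst_le_of_eventually {f : X → ℝ} {x : X} {L : ℝ}
    (h : ∀ᶠ y in 𝓝 x, |f y - f x| ≤ L * dist y x) : lipConst f x ≤ ENNReal.ofReal L := by
  refine Filter.limsup_le_of_le (by isBoundedDefault) ?_
  filter_upwards [nhdsWithin_le_nhds h, self_mem_nhdsWithin] with y hy hyx
  exact ENNReal.ofReal_le_ofReal <| (div_le_iff₀ (dist_pos.2 hyx)).2 hy

theorem lipConst_comp_dist_le {g : ℝ → ℝ} {x₀ x : X} {L : ℝ} (hL : 0 ≤ L)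
    (h : ∀ᶠ t in 𝓝 (dist x x₀), |g t - g (dist x x₀)| ≤ L * |t - dist x x₀|) :
    lipConst (fun y => g (dist y x₀)) x ≤ ENNReal.ofReal L := by
  refine lipConst_le_of_eventually ?_
  filter_upwards [(continuous_id.dist continuous_const).continuousAt.eventually h] with y hy
  exact hy.trans (mul_le_mul_of_nonneg_left (abs_dist_sub_le y x x₀) hL)

theorem lipConst_rpow_comp_dist_le {h : ℝ → ℝ}
    (hh : LipschitzWith 1 h) {α : ℝ} (hα : α < 0) {x₀ x : X} (hx : 0 < dist x x₀)
    (hev : ∀ᶠ t in 𝓝 (dist x x₀), dist x x₀ / 2 ≤ h t) :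
    lipConst (fun y => h (dist y x₀) ^ α) x
      ≤ ENNReal.ofReal (-α * 2 ^ (1 - α) * dist x x₀ ^ (α - 1)) := by
  have hconst : -α * (dist x x₀ / 2) ^ (α - 1) = -α * 2 ^ (1 - α) * dist x x₀ ^ (α - 1) := by
    rw [Real.div_rpow dist_nonneg zero_le_two, div_eq_mul_inv, ← Real.rpow_neg zero_le_two,
      neg_sub]
    ring
  have hL : 0 ≤ -α * (dist x x₀ / 2) ^ (α - 1) := mul_nonneg (by linarith) (by positivity)
  rw [← hconst]
  refine lipConst_comp_dist_le (g := fun t => h t ^ α) hL ?_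
  filter_upwards [hev] with t ht
  calc |h t ^ α - h (dist x x₀) ^ α|
      ≤ -α * (dist x x₀ / 2) ^ (α - 1) * |h t - h (dist x x₀)| :=
        abs_rpow_sub_rpow_le_of_neg hα (by positivity) ht hev.self_of_nhds
    _ ≤ -α * (dist x x₀ / 2) ^ (α - 1) * |t - dist x x₀| := by
        refine mul_le_mul_of_nonneg_left ?_ hL
        simpa [Real.dist_eq] using hh.dist_le_mul t (dist x x₀)

variable {x₀ : X} {α : ℝ}

theorem lipConst_max_dist_one_rpow_le (hα : α < 0) (x : X) :
    lipConst (fun y => max (dist y x₀) 1 ^ α) x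
      ≤ {y | dist y x₀ ∈ Ici 1}.indicator
          (fun y => ENNReal.ofReal (-α * 2 ^ (1 - α) * dist y x₀ ^ (α - 1))) x := by
  by_cases hx : 1 ≤ dist x x₀
  · rw [indicator_of_mem (show x ∈ {y | dist y x₀ ∈ Ici 1} from hx)]
    have hpos : 0 < dist x x₀ := one_pos.trans_le hx
    refine lipConst_rpow_comp_dist_le (LipschitzWith.id.max_const 1) hα hpos ?_
    filter_upwards [Ioi_mem_nhds (half_lt_self hpos)] with t ht
    exact (le_of_lt ht).trans (le_max_left _ _)
  · rw [indicator_of_notMem (show x ∉ {y | dist y x₀ ∈ Ici 1} from hx)]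
    refine (lipConst_comp_dist_le (g := fun t => max t 1 ^ α) le_rfl ?_).trans_eq
      ENNReal.ofReal_zero
    filter_upwards [Iio_mem_nhds (not_le.1 hx)] with t (ht : t < 1)
    simp [max_eq_right ht.le, max_eq_right (not_le.1 hx).le]

theorem lipConst_min_dist_one_rpow_le (hα : α < 0) {x : X} (hx : x ≠ x₀) :
    lipConst (fun y => min (dist y x₀) 1 ^ α) x
      ≤ {y | dist y x₀ ∈ Ioc 0 1}.indicator
          (fun y => ENNReal.ofReal (-α * 2 ^ (1 - α) * dist y x₀ ^ (α - 1))) x := by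
  have hpos : 0 < dist x x₀ := dist_pos.2 hx
  by_cases hx1 : dist x x₀ ≤ 1
  · rw [indicator_of_mem (show x ∈ {y | dist y x₀ ∈ Ioc 0 1} from ⟨hpos, hx1⟩)]
    refine lipConst_rpow_comp_dist_le (LipschitzWith.id.min_const 1) hα hpos ?_
    filter_upwards [Ioi_mem_nhds (half_lt_self hpos)] with t ht
    exact le_min ht.le (by linarith)
  · rw [indicator_of_notMem (show x ∉ {y | dist y x₀ ∈ Ioc 0 1} from fun h => hx1 h.2)]
    refine (lipConst_comp_dist_le (g := fun t => min t 1 ^ α) le_rfl ?_).trans_eq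
      ENNReal.ofReal_zero
    filter_upwards [Ioi_mem_nhds (not_le.1 hx1)] with t (ht : 1 < t)
    simp [min_eq_right ht.le, min_eq_right (not_le.1 hx1).le]

end LipConst

theorem ENNReal.tsum_ofReal_mul_pow_lt_top {c u : ℝ} (hc : 0 ≤ c) (hu₀ : 0 ≤ u) (hu : u < 1) :
    ∑' n : ℕ, ENNReal.ofReal (c * u ^ n) < ⊤ := by
  rw [← ENNReal.ofReal_tsum_of_nonneg (fun n => by positivity)
    ((summable_geometric_of_lt_one hu₀ hu).mul_left c)]
  exact ENNReal.ofReal_lt_top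

theorem MeasureTheory.lintegral_eq_top_of_pairwise_disjoint {X : Type*} [MeasurableSpace X]
    {μ : Measure X} {G : X → ℝ≥0∞} {E : ℕ → Set X} (hmeas : ∀ n, MeasurableSet (E n))
    (hdisj : Pairwise (Disjoint on E)) {δ : ℝ≥0∞} (hδ : δ ≠ 0)
    (hbound : ∀ n, δ ≤ ∫⁻ x in E n, G x ∂μ) : ∫⁻ x, G x ∂μ = ⊤ := by
  refine eq_top_iff.2 ?_
  calc (⊤ : ℝ≥0∞) = ∑' _ : ℕ, δ := (ENNReal.tsum_const_eq_top_of_ne_zero hδ).symm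
    _ ≤ ∑' n, ∫⁻ x in E n, G x ∂μ := ENNReal.tsum_le_tsum hbound
    _ = ∫⁻ x in ⋃ n, E n, G x ∂μ := (lintegral_iUnion hmeas hdisj _).symm
    _ ≤ ∫⁻ x, G x ∂μ := setLIntegral_le_lintegral _ _

theorem MeasureTheory.lintegral_rpow_lt_top_of_ae_le_indicator {X : Type*} [MeasurableSpace X]
    {μ : Measure X} {g : X → ℝ≥0∞} {S : Set X} (hS : MeasurableSet S) {w : X → ℝ} {A p : ℝ}
    (hA : 0 ≤ A) (hp : 0 < p) (hw : ∀ x, 0 ≤ w x)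
    (hg : ∀ᵐ x ∂μ, g x ≤ S.indicator (fun x => ENNReal.ofReal (A * w x)) x)
    (hfin : ∫⁻ x in S, ENNReal.ofReal (w x ^ p) ∂μ < ⊤) : ∫⁻ x, g x ^ p ∂μ < ⊤ := by
  have hgp : ∀ᵐ x ∂μ, g x ^ p
      ≤ S.indicator (fun x => ENNReal.ofReal (A ^ p) * ENNReal.ofReal (w x ^ p)) x := by
    filter_upwards [hg] with x hx
    by_cases hxS : x ∈ S
    · rw [indicator_of_mem hxS] at hx ⊢
      rw [← ENNReal.ofReal_mul (by positivity), ← Real.mul_rpow hA (hw x),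
        ← ENNReal.ofReal_rpow_of_nonneg (mul_nonneg hA (hw x)) hp.le]
      exact ENNReal.rpow_le_rpow hx hp.le
    · rw [indicator_of_notMem hxS] at hx ⊢
      rw [nonpos_iff_eq_zero.1 hx, ENNReal.zero_rpow_of_pos hp]
  calc ∫⁻ x, g x ^ p ∂μ
      ≤ ∫⁻ x, S.indicator (fun x => ENNReal.ofReal (A ^ p) * ENNReal.ofReal (w x ^ p)) x ∂μ :=
        lintegral_mono_ae hgp
    _ = ENNReal.ofReal (A ^ p) * ∫⁻ x in S, ENNReal.ofReal (w x ^ p) ∂μ := by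
        rw [lintegral_indicator hS, lintegral_const_mul' _ _ ENNReal.ofReal_ne_top]
    _ < ⊤ := ENNReal.mul_lt_top ENNReal.ofReal_lt_top hfin

theorem ofReal_mul_rpow_neg_le_rpow_abs {α q s ε t v : ℝ} (hq : 0 < q) (hαq : α * q = -s)
    (hε : 0 ≤ ε) (ht : 0 < t) (h : ε * t ^ α ≤ |v|) :
    ENNReal.ofReal (ε ^ q * t ^ (-s)) ≤ ENNReal.ofReal |v| ^ q := by
  rw [← hαq, Real.rpow_mul ht.le, ← Real.mul_rpow hε (by positivity),
    ← ENNReal.ofReal_rpow_of_nonneg (by positivity) hq.le]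
  exact ENNReal.rpow_le_rpow (ENNReal.ofReal_le_ofReal h) hq.le

theorem exists_mul_rpow_le_abs_rpow_sub_of_large {α : ℝ} (hα : α < 0) (c : ℝ) :
    ∃ R, 1 ≤ R ∧ ∃ ε > 0, ∀ t, R ≤ t → ε * t ^ α ≤ |t ^ α - c| := by
  rcases le_or_gt c 0 with hc | hc
  · refine ⟨1, le_rfl, 1, one_pos, fun t ht => ?_⟩
    rw [one_mul]
    exact (by linarith : t ^ α ≤ t ^ α - c).trans (le_abs_self _)
  · refine ⟨max 1 ((c / 2) ^ α⁻¹), le_max_left _ _, c / 2, half_pos hc, fun t ht => ?_⟩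
    have hsmall : t ^ α ≤ c / 2 := by
      calc t ^ α ≤ ((c / 2) ^ α⁻¹) ^ α :=
            Real.rpow_le_rpow_of_nonpos (by positivity) ((le_max_right _ _).trans ht) hα.le
        _ = c / 2 := Real.rpow_inv_rpow (half_pos hc).le hα.ne
    have hle1 : t ^ α ≤ 1 := Real.rpow_le_one_of_one_le_of_nonpos ((le_max_left _ _).trans ht) hα.le
    refine le_trans ?_ (neg_le_abs _)
    nlinarith

theorem exists_half_rpow_le_abs_rpow_sub_of_small {α : ℝ} (hα : α < 0) (c : ℝ) :
    ∃ ρ, 0 < ρ ∧ ρ ≤ 1 ∧ ∀ t, 0 < t → t ≤ ρ → 2⁻¹ * t ^ α ≤ |t ^ α - c| := by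
  refine ⟨(2 * |c| + 1) ^ α⁻¹, by positivity,
    Real.rpow_le_one_of_one_le_of_nonpos (by linarith [abs_nonneg c]) (inv_nonpos.2 hα.le),
    fun t ht htρ => ?_⟩
  have hlarge : 2 * |c| + 1 ≤ t ^ α := by
    calc 2 * |c| + 1 = ((2 * |c| + 1) ^ α⁻¹) ^ α := (Real.rpow_inv_rpow (by positivity) hα.ne).symm
      _ ≤ t ^ α := Real.rpow_le_rpow_of_nonpos ht htρ hα.le
  linarith [le_abs_self (t ^ α), abs_sub_abs_le_abs_sub (t ^ α) c]

/-- `f` witnesses the failure of every global Sobolev inequality `‖f - c‖_q ≤ C ‖lip f‖_p`. -/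
def IsSobolevCounterexample {X : Type*} [MetricSpace X] [MeasurableSpace X] (μ : Measure X)
    (p q : ℝ) (f : X → ℝ) : Prop :=
  Measurable f ∧ LocallyIntegrable (fun x => |f x| ^ p) μ ∧ (∫⁻ x, lipConst f x ^ p ∂μ) < ⊤ ∧
    ∀ c : ℝ, (∫⁻ x, ENNReal.ofReal |f x - c| ^ q ∂μ) = ⊤

section Annuli

variable {X : Type*} [MetricSpace X] [MeasurableSpace X] [BorelSpace X] {s : ℝ} {μ : Measure X}
  {x₀ : X}

theorem setLIntegral_rpow_dist_Icc_le {C β ρ : ℝ}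
    (hup : ∀ r, 0 < r → μ (ball x₀ r) ≤ ENNReal.ofReal (C * r ^ s)) (hβ : β ≤ 0) (hρ : 0 < ρ) :
    ∫⁻ x in {x | dist x x₀ ∈ Icc ρ (2 * ρ)}, ENNReal.ofReal (dist x x₀ ^ β) ∂μ
      ≤ ENNReal.ofReal (C * 3 ^ s * ρ ^ (β + s)) := by
  have hshell : {x | dist x x₀ ∈ Icc ρ (2 * ρ)} ⊆ ball x₀ (3 * ρ) := fun x hx => by
    rw [mem_ball]
    linarith [hx.2]
  calc ∫⁻ x in {x | dist x x₀ ∈ Icc ρ (2 * ρ)}, ENNReal.ofReal (dist x x₀ ^ β) ∂μ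
      ≤ ∫⁻ _ in {x | dist x x₀ ∈ Icc ρ (2 * ρ)}, ENNReal.ofReal (ρ ^ β) ∂μ :=
        setLIntegral_mono'
          (measurableSet_Icc.preimage (continuous_id.dist continuous_const).measurable)
          fun x hx => ENNReal.ofReal_le_ofReal (Real.rpow_le_rpow_of_nonpos hρ hx.1 hβ)
    _ ≤ ENNReal.ofReal (ρ ^ β) * ENNReal.ofReal (C * (3 * ρ) ^ s) := by
        rw [setLIntegral_const]
        exact mul_le_mul_right ((measure_mono hshell).trans (hup _ (by positivity))) _
    _ = ENNReal.ofReal (C * 3 ^ s * ρ ^ (β + s)) := by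
        rw [← ENNReal.ofReal_mul (by positivity), Real.mul_rpow zero_le_three hρ.le,
          Real.rpow_add hρ]
        ring_nf

theorem le_setLIntegral_annulus (hs : 0 ≤ s) {K R δ : ℝ} (hK : 1 < K) (hR : 0 < R) (hδ : 0 ≤ δ)
    (hann : ENNReal.ofReal (R ^ s) ≤ μ {x | dist x x₀ ∈ Ico R (K * R)}) {G : X → ℝ≥0∞}
    (hG : ∀ x, dist x x₀ ∈ Ico R (K * R) → ENNReal.ofReal (δ * dist x x₀ ^ (-s)) ≤ G x) :
    ENNReal.ofReal (δ * K ^ (-s)) ≤ ∫⁻ x in {x | dist x x₀ ∈ Ico R (K * R)}, G x ∂μ := by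
  have hscale : δ * K ^ (-s) = δ * (K * R) ^ (-s) * R ^ s := by
    rw [Real.mul_rpow (by positivity) hR.le, Real.rpow_neg hR.le, mul_assoc, mul_assoc,
      inv_mul_cancel₀ (Real.rpow_pos_of_pos hR s).ne', mul_one]
  calc ENNReal.ofReal (δ * K ^ (-s))
      = ENNReal.ofReal (δ * (K * R) ^ (-s)) * ENNReal.ofReal (R ^ s) := by
        rw [hscale, ENNReal.ofReal_mul (by positivity)]
    _ ≤ ∫⁻ _ in {x | dist x x₀ ∈ Ico R (K * R)}, ENNReal.ofReal (δ * (K * R) ^ (-s)) ∂μ := by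
        rw [setLIntegral_const]
        exact mul_le_mul_right hann _
    _ ≤ ∫⁻ x in {x | dist x x₀ ∈ Ico R (K * R)}, G x ∂μ := by
        refine setLIntegral_mono' (measurableSet_Ico.preimage
          (continuous_id.dist continuous_const).measurable) fun x hx => (hG x hx).trans' ?_
        refine ENNReal.ofReal_le_ofReal (mul_le_mul_of_nonneg_left ?_ hδ)
        exact Real.rpow_le_rpow_of_nonpos (hR.trans_le hx.1) hx.2.le (by linarith)

theorem lintegral_eq_top_of_annuli (hs : 0 ≤ s) {K δ : ℝ} (hK : 1 < K) (hδ : 0 < δ)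
    (hann : ∀ R, 0 < R → ENNReal.ofReal (R ^ s) ≤ μ {x | dist x x₀ ∈ Ico R (K * R)})
    {r : ℕ → ℝ} (hr : ∀ n, 0 < r n) (hdisj : Pairwise (Disjoint on fun n => Ico (r n) (K * r n)))
    {G : X → ℝ≥0∞}
    (hG : ∀ n x, dist x x₀ ∈ Ico (r n) (K * r n) → ENNReal.ofReal (δ * dist x x₀ ^ (-s)) ≤ G x) :
    ∫⁻ x, G x ∂μ = ⊤ :=
  lintegral_eq_top_of_pairwise_disjoint
    (fun _ => measurableSet_Ico.preimage (continuous_id.dist continuous_const).measurable)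
    (fun _ _ hmn => (hdisj hmn).preimage _)
    (ENNReal.ofReal_pos.2 (mul_pos hδ (Real.rpow_pos_of_pos (one_pos.trans hK) _))).ne'
    fun n => le_setLIntegral_annulus hs hK (hr n) hδ.le (hann _ (hr n)) (hG n)

end Annuli

namespace AhlforsRegular

variable {X : Type*} [MetricSpace X] [MeasurableSpace X] {s : ℝ} {μ : Measure X}

theorem exists_measure_ball_le (hreg : AhlforsRegular s μ) :
    ∃ C, 0 ≤ C ∧ ∀ x r, 0 < r → μ (ball x r) ≤ ENNReal.ofReal (C * r ^ s) := by
  obtain ⟨C, hC, h⟩ := hreg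
  exact ⟨C, zero_le_one.trans hC, fun x r hr => (h x r hr).2⟩

theorem measure_ball_lt_top (hreg : AhlforsRegular s μ) (x : X) (r : ℝ) : μ (ball x r) < ⊤ := by
  obtain ⟨C, -, hup⟩ := hreg.exists_measure_ball_le
  rcases le_or_gt r 0 with hr | hr
  · simp [ball_eq_empty.2 hr]
  · exact (hup x r hr).trans_lt ENNReal.ofReal_lt_top

theorem isLocallyFiniteMeasure (hreg : AhlforsRegular s μ) : IsLocallyFiniteMeasure μ :=
  ⟨fun x => ⟨ball x 1, ball_mem_nhds x one_pos, hreg.measure_ball_lt_top x 1⟩⟩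

theorem measure_singleton (hreg : AhlforsRegular s μ) (hs : 0 < s) (x : X) : μ {x} = 0 := by
  obtain ⟨C, -, hup⟩ := hreg.exists_measure_ball_le
  have hlim : Tendsto (fun r : ℝ => ENNReal.ofReal (C * r ^ s)) (𝓝[>] 0) (𝓝 0) := by
    have h : Tendsto (fun r : ℝ => C * r ^ s) (𝓝[>] 0) (𝓝 (C * 0 ^ s)) :=
      ((continuous_const.mul (Real.continuous_rpow_const hs.le)).tendsto 0).mono_left
        nhdsWithin_le_nhds
    simpa [Real.zero_rpow hs.ne'] using ENNReal.tendsto_ofReal h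
  refine le_antisymm (ge_of_tendsto hlim ?_) bot_le
  filter_upwards [self_mem_nhdsWithin] with r hr
  exact (measure_mono (singleton_subset_iff.2 (mem_ball_self hr))).trans (hup x r hr)

/-- With `K ^ s = 2 C²`, the lower bound for `μ (ball x (K R))` beats the upper bound for
`μ (ball x R)` by `C Rˢ ≥ Rˢ`. -/
theorem exists_le_measure_annulus (hreg : AhlforsRegular s μ) (hs : 0 < s) :
    ∃ K, 1 < K ∧ ∀ x R, 0 < R →
      ENNReal.ofReal (R ^ s) ≤ μ {y | dist y x ∈ Ico R (K * R)} := by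
  obtain ⟨C, hC, hreg⟩ := hreg
  set K := (2 * C ^ 2) ^ s⁻¹
  have hKs : K ^ s = 2 * C ^ 2 := Real.rpow_inv_rpow (by positivity) hs.ne'
  have hK : 1 < K := by
    by_contra! h
    have : K ^ s ≤ 1 := Real.rpow_le_one (by positivity) h hs.le
    nlinarith
  refine ⟨K, hK, fun x R hR => ?_⟩
  have hannulus : {y | dist y x ∈ Ico R (K * R)} = ball x (K * R) \ ball x R := by
    ext y
    simp [and_comm]
  have hRs : 0 < R ^ s := Real.rpow_pos_of_pos hR s
  have hKR : (K * R) ^ s / C - C * R ^ s = C * R ^ s := by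
    rw [Real.mul_rpow (by positivity) hR.le, hKs]
    field_simp
    ring
  calc ENNReal.ofReal (R ^ s) ≤ ENNReal.ofReal ((K * R) ^ s / C - C * R ^ s) := by
        rw [hKR]
        exact ENNReal.ofReal_le_ofReal (le_mul_of_one_le_left hRs.le hC)
    _ = ENNReal.ofReal ((K * R) ^ s / C) - ENNReal.ofReal (C * R ^ s) :=
        ENNReal.ofReal_sub _ (by positivity)
    _ ≤ μ (ball x (K * R)) - μ (ball x R) :=
        tsub_le_tsub (hreg x _ (by positivity)).1 (hreg x R hR).2
    _ ≤ μ {y | dist y x ∈ Ico R (K * R)} := hannulus ▸ le_measure_sdiff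

variable [BorelSpace X] {x₀ : X}

theorem setLIntegral_rpow_dist_Ici_one_lt_top (hreg : AhlforsRegular s μ) (hs : 0 < s) {β : ℝ}
    (hβ : β + s < 0) :
    ∫⁻ x in {x | dist x x₀ ∈ Ici 1}, ENNReal.ofReal (dist x x₀ ^ β) ∂μ < ⊤ := by
  obtain ⟨C, hC, hup⟩ := hreg.exists_measure_ball_le
  have hcover : {x | dist x x₀ ∈ Ici 1} ⊆ ⋃ n : ℕ, {x | dist x x₀ ∈ Icc (2 ^ n) (2 * 2 ^ n)} :=
    fun x hx => by
      obtain ⟨n, hn, hn'⟩ := exists_nat_pow_near (x := dist x x₀) hx one_lt_two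
      exact mem_iUnion.2 ⟨n, hn, (pow_succ' (2 : ℝ) n) ▸ hn'.le⟩
  calc _ ≤ ∑' n : ℕ, ∫⁻ x in {x | dist x x₀ ∈ Icc (2 ^ n) (2 * 2 ^ n)},
          ENNReal.ofReal (dist x x₀ ^ β) ∂μ :=
        (lintegral_mono_set hcover).trans (lintegral_iUnion_le _ _)
    _ ≤ ∑' n : ℕ, ENNReal.ofReal (C * 3 ^ s * (2 ^ (β + s)) ^ n) := by
        refine ENNReal.tsum_le_tsum fun n => ?_
        rw [Real.rpow_pow_comm zero_le_two]
        exact setLIntegral_rpow_dist_Icc_le (hup x₀) (by linarith) (by positivity)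
    _ < ⊤ := ENNReal.tsum_ofReal_mul_pow_lt_top (by positivity) (by positivity)
        (Real.rpow_lt_one_of_one_lt_of_neg one_lt_two hβ)

theorem setLIntegral_rpow_dist_Ioc_zero_one_lt_top (hreg : AhlforsRegular s μ) {β : ℝ}
    (hβ : β < 0) (hβs : 0 < β + s) :
    ∫⁻ x in {x | dist x x₀ ∈ Ioc 0 1}, ENNReal.ofReal (dist x x₀ ^ β) ∂μ < ⊤ := by
  obtain ⟨C, hC, hup⟩ := hreg.exists_measure_ball_le
  set u : ℝ := 2⁻¹
  have hcover : {x | dist x x₀ ∈ Ioc 0 1} ⊆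
      ⋃ n : ℕ, {x | dist x x₀ ∈ Icc (u ^ (n + 1)) (2 * u ^ (n + 1))} := fun x hx => by
    obtain ⟨n, hn, hn'⟩ := exists_nat_pow_near_of_lt_one hx.1 hx.2 (by norm_num : (0 : ℝ) < u)
      (by norm_num)
    refine mem_iUnion.2 ⟨n, hn.le, ?_⟩
    rwa [pow_succ', ← mul_assoc, mul_inv_cancel₀ two_ne_zero, one_mul]
  calc _ ≤ ∑' n : ℕ, ∫⁻ x in {x | dist x x₀ ∈ Icc (u ^ (n + 1)) (2 * u ^ (n + 1))},
          ENNReal.ofReal (dist x x₀ ^ β) ∂μ :=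
        (lintegral_mono_set hcover).trans (lintegral_iUnion_le _ _)
    _ ≤ ∑' n : ℕ, ENNReal.ofReal (C * 3 ^ s * u ^ (β + s) * (u ^ (β + s)) ^ n) := by
        refine ENNReal.tsum_le_tsum fun n => ?_
        rw [mul_assoc _ (u ^ (β + s)), ← pow_succ', Real.rpow_pow_comm (by norm_num)]
        exact setLIntegral_rpow_dist_Icc_le (hup x₀) hβ.le (by positivity)
    _ < ⊤ := ENNReal.tsum_ofReal_mul_pow_lt_top (by positivity) (by positivity)
        (Real.rpow_lt_one (by norm_num) (by norm_num) hβs)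

theorem lintegral_eq_top_of_le_rpow_neg_dist_Ici (hreg : AhlforsRegular s μ) (hs : 0 < s)
    {R δ : ℝ} (hR : 0 < R) (hδ : 0 < δ) {G : X → ℝ≥0∞}
    (hG : ∀ x, dist x x₀ ∈ Ici R → ENNReal.ofReal (δ * dist x x₀ ^ (-s)) ≤ G x) :
    ∫⁻ x, G x ∂μ = ⊤ := by
  obtain ⟨K, hK, hann⟩ := hreg.exists_le_measure_annulus hs
  have hmono : Monotone fun n : ℕ => R * K ^ n :=
    fun m n hmn => mul_le_mul_of_nonneg_left (pow_le_pow_right₀ hK.le hmn) hR.le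
  refine lintegral_eq_top_of_annuli hs.le hK hδ (hann x₀) (r := fun n => R * K ^ n)
    (fun n => by positivity) ?_ fun n x hx => hG x ?_
  · simpa [pow_succ, mul_comm, mul_left_comm] using hmono.pairwise_disjoint_on_Ico_succ
  · exact (le_mul_of_one_le_right hR.le (one_le_pow₀ hK.le)).trans hx.1

theorem lintegral_eq_top_of_le_rpow_neg_dist_Ioc (hreg : AhlforsRegular s μ) (hs : 0 < s)
    {ρ δ : ℝ} (hρ : 0 < ρ) (hδ : 0 < δ) {G : X → ℝ≥0∞}
    (hG : ∀ x, dist x x₀ ∈ Ioc 0 ρ → ENNReal.ofReal (δ * dist x x₀ ^ (-s)) ≤ G x) :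
    ∫⁻ x, G x ∂μ = ⊤ := by
  obtain ⟨K, hK, hann⟩ := hreg.exists_le_measure_annulus hs
  have hanti : Antitone fun n : ℕ => ρ / K ^ n :=
    fun m n hmn => div_le_div_of_nonneg_left hρ.le (by positivity) (pow_le_pow_right₀ hK.le hmn)
  have hstep : ∀ n : ℕ, K * (ρ / K ^ (n + 1)) = ρ / K ^ n := fun n => by
    rw [pow_succ']
    field_simp
  refine lintegral_eq_top_of_annuli hs.le hK hδ (hann x₀) (r := fun n => ρ / K ^ (n + 1))
    (fun n => by positivity) ?_ fun n x hx => hG x ⟨?_, ?_⟩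
  · simpa only [hstep, Order.succ_eq_add_one] using hanti.pairwise_disjoint_on_Ico_succ
  · exact lt_of_lt_of_le (by positivity) hx.1
  · exact hx.2.le.trans ((hstep n).symm ▸ div_le_self hρ.le (one_le_pow₀ hK.le))

theorem locallyIntegrable_min_dist_one_rpow (hreg : AhlforsRegular s μ) {β : ℝ} (hβ : β < 0)
    (hβs : 0 < β + s) : LocallyIntegrable (fun x => min (dist x x₀) 1 ^ β) μ := by
  have := hreg.isLocallyFiniteMeasure
  have hS : MeasurableSet {x | dist x x₀ ∈ Ioc 0 1} :=
    measurableSet_Ioc.preimage (continuous_id.dist continuous_const).measurable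
  have hint : IntegrableOn (fun x => dist x x₀ ^ β) {x | dist x x₀ ∈ Ioc 0 1} μ :=
    ⟨((continuous_id.dist continuous_const).measurable.pow_const _).aestronglyMeasurable,
      (hasFiniteIntegral_iff_ofReal (ae_of_all _ fun x => by positivity)).2
        (hreg.setLIntegral_rpow_dist_Ioc_zero_one_lt_top hβ hβs)⟩
  have hmeas : Measurable fun x => min (dist x x₀) 1 ^ β :=
    ((continuous_id.dist continuous_const).min continuous_const).measurable.pow_const β
  refine ((hint.integrable_indicator hS).locallyIntegrable.add (locallyIntegrable_const 1)).mono
    hmeas.aestronglyMeasurable (ae_of_all _ fun x => ?_)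
  rw [Real.norm_of_nonneg (by positivity), Pi.add_apply,
    Real.norm_of_nonneg (add_nonneg (indicator_nonneg (fun y _ => by positivity) x) zero_le_one)]
  by_cases hx : x ∈ {x | dist x x₀ ∈ Ioc 0 1}
  · rw [indicator_of_mem hx, min_eq_left hx.2]
    linarith
  · rw [indicator_of_notMem hx, zero_add]
    rcases (dist_nonneg (x := x) (y := x₀)).eq_or_lt with h0 | hpos
    · rw [← h0, min_eq_left zero_le_one, Real.zero_rpow hβ.ne]
      exact zero_le_one
    · rw [min_eq_right (not_le.1 fun h => hx ⟨hpos, h⟩).le, Real.one_rpow]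

variable {p q α : ℝ}

theorem isSobolevCounterexample_max_dist_one_rpow (hreg : AhlforsRegular s μ) (hs : 0 < s)
    (hp : 0 < p) (hq : 0 < q) (hαq : α * q = -s) (hexp : (α - 1) * p + s < 0) (x₀ : X) :
    IsSobolevCounterexample μ p q fun x => max (dist x x₀) 1 ^ α := by
  have hα : α < 0 := by nlinarith
  have hcont : Continuous fun x => max (dist x x₀) 1 ^ α :=
    ((continuous_id.dist continuous_const).max continuous_const).rpow_const
      fun x => Or.inl (one_pos.trans_le (le_max_right _ _)).ne'
  have := hreg.isLocallyFiniteMeasure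
  refine ⟨hcont.measurable, (hcont.abs.rpow_const fun _ => Or.inr hp.le).locallyIntegrable, ?_,
    fun c => ?_⟩
  · refine lintegral_rpow_lt_top_of_ae_le_indicator
      (measurableSet_Ici.preimage (continuous_id.dist continuous_const).measurable)
      (mul_nonneg (by linarith) (by positivity)) hp (fun x => by positivity)
      (ae_of_all _ (lipConst_max_dist_one_rpow_le hα)) ?_
    simp_rw [← Real.rpow_mul dist_nonneg]
    exact hreg.setLIntegral_rpow_dist_Ici_one_lt_top hs hexp
  · obtain ⟨R, hR, ε, hε, hfar⟩ := exists_mul_rpow_le_abs_rpow_sub_of_large hα c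
    refine hreg.lintegral_eq_top_of_le_rpow_neg_dist_Ici (x₀ := x₀) hs (one_pos.trans_le hR)
      (Real.rpow_pos_of_pos hε q) fun x (hx : R ≤ dist x x₀) => ?_
    have hx1 : 1 ≤ dist x x₀ := hR.trans hx
    refine ofReal_mul_rpow_neg_le_rpow_abs hq hαq hε.le (one_pos.trans_le hx1) ?_
    simpa only [max_eq_left hx1] using hfar _ hx

theorem isSobolevCounterexample_min_dist_one_rpow (hreg : AhlforsRegular s μ) (hs : 0 < s)
    (hp : 0 < p) (hq : 0 < q) (hαq : α * q = -s) (hexp : 0 < (α - 1) * p + s) (x₀ : X) :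
    IsSobolevCounterexample μ p q fun x => min (dist x x₀) 1 ^ α := by
  have hα : α < 0 := by nlinarith
  have hcont : Continuous fun x => min (dist x x₀) 1 :=
    (continuous_id.dist continuous_const).min continuous_const
  have habs : (fun x => |min (dist x x₀) 1 ^ α| ^ p) = fun x => min (dist x x₀) 1 ^ (α * p) := by
    ext x
    have : 0 ≤ min (dist x x₀) 1 := le_min dist_nonneg zero_le_one
    rw [abs_of_nonneg (by positivity), ← Real.rpow_mul this]
  refine ⟨hcont.measurable.pow_const α,
    habs ▸ hreg.locallyIntegrable_min_dist_one_rpow (by nlinarith) (by linarith), ?_, fun c => ?_⟩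
  · have hae : ∀ᵐ x ∂μ, x ≠ x₀ := ae_iff.2 (by simpa using hreg.measure_singleton hs x₀)
    refine lintegral_rpow_lt_top_of_ae_le_indicator
      (measurableSet_Ioc.preimage (continuous_id.dist continuous_const).measurable)
      (mul_nonneg (by linarith) (by positivity)) hp (fun x => by positivity)
      (hae.mono fun x hx => lipConst_min_dist_one_rpow_le hα hx) ?_
    simp_rw [← Real.rpow_mul dist_nonneg]
    exact hreg.setLIntegral_rpow_dist_Ioc_zero_one_lt_top (by nlinarith) hexp
  · obtain ⟨ρ, hρ, hρ1, hnear⟩ := exists_half_rpow_le_abs_rpow_sub_of_small hα c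
    refine hreg.lintegral_eq_top_of_le_rpow_neg_dist_Ioc (x₀ := x₀) hs hρ
      (Real.rpow_pos_of_pos (inv_pos.2 two_pos) q) fun x (hx : dist x x₀ ∈ Ioc 0 ρ) => ?_
    refine ofReal_mul_rpow_neg_le_rpow_abs hq hαq (by norm_num) hx.1 ?_
    simpa only [min_eq_left (hx.2.trans hρ1)] using hnear _ hx.1 hx.2

end AhlforsRegular

theorem statement8_general {X : Type*} [MetricSpace X] [MeasurableSpace X] [BorelSpace X]
    (μ : Measure X) (hXinf : μ Set.univ = ⊤)
    (s : ℝ) (hs : 0 < s) (hreg : AhlforsRegular s μ)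
    (p q : ℝ) (hp : 1 ≤ p) (hq : 1 ≤ q) (hpq : 1 / q + 1 / s ≠ 1 / p) :
    ∃ f : X → ℝ, Measurable f ∧ LocallyIntegrable (fun x => |f x| ^ p) μ ∧
      (∫⁻ x, lipConst f x ^ p ∂μ) < ⊤ ∧
      ∀ c : ℝ, (∫⁻ x, ENNReal.ofReal |f x - c| ^ q ∂μ) = ⊤ := by
  obtain ⟨x₀, -⟩ := nonempty_of_measure_ne_zero (hXinf ▸ ENNReal.top_ne_zero : μ univ ≠ 0)
  have hp₀ : 0 < p := by linarith
  have hq₀ : 0 < q := by linarith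
  have hαq : -(s / q) * q = -s := by field_simp
  have hexp : (-(s / q) - 1) * p + s = p * s * (1 / p - (1 / q + 1 / s)) := by
    field_simp
    ring
  rcases hpq.lt_or_gt with h | h
  · refine ⟨_, hreg.isSobolevCounterexample_min_dist_one_rpow hs hp₀ hq₀ hαq ?_ x₀⟩
    rw [hexp]
    exact mul_pos (by positivity) (by linarith)
  · refine ⟨_, hreg.isSobolevCounterexample_max_dist_one_rpow hs hp₀ hq₀ hαq ?_ x₀⟩
    rw [hexp]
    exact mul_neg_of_pos_of_neg (by positivity) (by linarith)

/-- under the standing assumptions, if `μ` is Ahlfors `s`-regular, then for all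
`p, q ∈ [1,∞)` with `1/q + 1/s ≠ 1/p` there is a measurable `f : X → ℝ` with `|f|ᵖ` locally
integrable, `∫ (lip f)ᵖ dμ < ∞`, and `∫ |f - c|^q dμ = ∞` for every `c ∈ ℝ`. -/
theorem statement8 {X : Type*} [MetricSpace X] [MeasurableSpace X] [BorelSpace X]
    [ProperSpace X] [ConnectedSpace X]
    (μ : Measure X) (hXinf : μ Set.univ = ⊤)
    (hball : ∀ (x : X) (r : ℝ), 0 < r → 0 < μ (ball x r) ∧ μ (ball x r) < ⊤)
    (s : ℝ) (hs : 0 < s) (hreg : AhlforsRegular s μ)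
    (p q : ℝ) (hp : 1 ≤ p) (hq : 1 ≤ q) (hpq : 1 / q + 1 / s ≠ 1 / p) :
    ∃ f : X → ℝ, Measurable f ∧ LocallyIntegrable (fun x => |f x| ^ p) μ ∧
      (∫⁻ x, lipConst f x ^ p ∂μ) < ⊤ ∧
      ∀ c : ℝ, (∫⁻ x, ENNReal.ofReal |f x - c| ^ q ∂μ) = ⊤ :=
  statement8_general μ hXinf s hs hreg p q hp hq hpq
end

section
/- Let (X,d) be a proper, connected, unbounded metric space that is uniformly locally quasiconvex with constants R ∈ (0,∞) and C ≥ 1. Then for every x₀ ∈ X and every r > 0, only finitely many connected components of X ∖ B(x₀,r) have nonempty intersection with X ∖ B(x₀, r + 2CR). -/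
/-!
Put `F = X ∖ B(x₀, r)` and `ρ = r + CR`. A point of `F` at distance at least `ρ` from `x₀` is
joined by a quasiconvex curve, which stays in `F`, to every point within distance `R`; so a
component of `F` lying entirely outside `B̄(x₀, ρ)` would be open and closed, hence all of `X`,
which is absurd since `x₀ ∉ F`. By connectedness of the component and the intermediate value
theorem, every component reaching distance `ρ + CR` meets the sphere `S(x₀, ρ)`, and points of
that sphere in different components are more than `R` apart. The sphere is compact, so only
finitely many components can meet it.
-/

open Metric Set
open scoped NNReal

def UniformlyLocallyQuasiconvex (X : Type*) [MetricSpace X] (R C : ℝ) : Prop :=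
  ∀ x y : X, dist x y ≤ R →
    ∃ γ : ℝ → X, LipschitzOnWith (Real.toNNReal (C * dist x y)) γ (Set.Icc 0 1) ∧
      γ 0 = x ∧ γ 1 = y

theorem IsClosed.connectedComponentIn {X : Type*} [TopologicalSpace X] {F : Set X}
    (hF : IsClosed F) (x : X) : IsClosed (connectedComponentIn F x) := by
  by_cases hx : x ∈ F
  · rw [connectedComponentIn_eq_image hx]
    exact hF.isClosedEmbedding_subtypeVal.isClosedMap _ isClosed_connectedComponent
  · rw [connectedComponentIn_eq_empty hx]
    exact isClosed_empty

theorem LipschitzOnWith.image_Icc_subset_closedBall {X : Type*} [PseudoMetricSpace X]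
    {γ : ℝ → X} {K : ℝ≥0} (hγ : LipschitzOnWith K γ (Icc 0 1)) :
    γ '' Icc 0 1 ⊆ closedBall (γ 0) K := by
  rintro _ ⟨t, ht, rfl⟩
  have hdt : dist t 0 ≤ 1 := by
    rw [Real.dist_eq, sub_zero, abs_of_nonneg ht.1]; exact ht.2
  calc dist (γ t) (γ 0) ≤ K * dist t 0 := hγ.dist_le_mul t ht 0 (left_mem_Icc.2 zero_le_one)
    _ ≤ K * 1 := by gcongr
    _ = K := mul_one _

theorem closedBall_subset_compl_ball_of_add_le_dist {X : Type*} [PseudoMetricSpace X]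
    {x₀ y : X} {r δ : ℝ} (h : r + δ ≤ dist x₀ y) : closedBall y δ ⊆ (ball x₀ r)ᶜ :=
  (closedBall_disjoint_ball (by rwa [dist_comm, add_comm])).subset_compl_right

theorem TotallyBounded.finite_of_forall_inter_nonempty {X : Type*} [PseudoMetricSpace X]
    {K : Set X} (hK : TotallyBounded K) {ε : ℝ} (hε : 0 < ε) {S : Set (Set X)}
    (hmeet : ∀ E ∈ S, (E ∩ K).Nonempty)
    (hsep : ∀ E ∈ S, ∀ E' ∈ S, ∀ a ∈ E ∩ K, ∀ b ∈ E' ∩ K, dist a b < ε → E = E') :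
    S.Finite := by
  obtain ⟨t, -, htfin, hcover⟩ := finite_approx_of_totallyBounded hK (ε / 2) (half_pos hε)
  have hcenter : ∀ E : S, ∃ c : t, (E.1 ∩ K ∩ ball c.1 (ε / 2)).Nonempty := by
    rintro ⟨E, hE⟩
    obtain ⟨a, ha⟩ := hmeet E hE
    obtain ⟨c, hc, hac⟩ := mem_iUnion₂.1 (hcover ha.2)
    exact ⟨⟨c, hc⟩, a, ha, hac⟩
  choose f hf using hcenter
  have hinj : Function.Injective f := by
    rintro ⟨E, hE⟩ ⟨E', hE'⟩ hff
    obtain ⟨a, ha, hac⟩ := hf ⟨E, hE⟩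
    obtain ⟨b, hb, hbc⟩ := hf ⟨E', hE'⟩
    rw [hff] at hac
    refine Subtype.ext (hsep E hE E' hE' a ha b hb ?_)
    calc dist a b ≤ dist a (f ⟨E', hE'⟩) + dist b (f ⟨E', hE'⟩) := dist_triangle_right _ _ _
      _ < ε / 2 + ε / 2 := add_lt_add hac hbc
      _ = ε := add_halves ε
  have := htfin.to_subtype
  exact Set.finite_coe_iff.1 (Finite.of_injective f hinj)

namespace UniformlyLocallyQuasiconvex

variable {X : Type*} [MetricSpace X] {R C : ℝ}

theorem mem_connectedComponentIn (hX : UniformlyLocallyQuasiconvex X R C) (hC : 0 ≤ C)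
    {F : Set X} {y z : X} (hyz : dist y z ≤ R) (hF : closedBall y (C * R) ⊆ F) :
    z ∈ connectedComponentIn F y := by
  obtain ⟨γ, hγ, hγ0, hγ1⟩ := hX y z hyz
  have hsub : γ '' Icc 0 1 ⊆ F := by
    refine hγ.image_Icc_subset_closedBall.trans (hγ0.symm ▸ (closedBall_subset_closedBall ?_).trans hF)
    rw [Real.coe_toNNReal _ (by positivity)]
    gcongr
  exact (isPreconnected_Icc.image γ hγ.continuousOn).subset_connectedComponentIn
    ⟨0, left_mem_Icc.2 zero_le_one, hγ0⟩ hsub ⟨1, right_mem_Icc.2 zero_le_one, hγ1⟩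

theorem exists_mem_connectedComponentIn_dist_le [ConnectedSpace X]
    (hX : UniformlyLocallyQuasiconvex X R C) (hR : 0 < R) (hC : 0 ≤ C)
    {x₀ y : X} {r : ℝ} (hr : 0 < r) (hy : y ∈ (ball x₀ r)ᶜ) :
    ∃ z ∈ connectedComponentIn (ball x₀ r)ᶜ y, dist x₀ z ≤ r + C * R := by
  by_contra! hfar
  have hopen : IsOpen (connectedComponentIn (ball x₀ r)ᶜ y) := by
    refine isOpen_iff.2 fun w hw ↦ ⟨R, hR, fun z hz ↦ ?_⟩
    rw [connectedComponentIn_eq hw]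
    exact hX.mem_connectedComponentIn hC (mem_ball'.1 hz).le
      (closedBall_subset_compl_ball_of_add_le_dist (hfar w hw).le)
  have hclosed := (isOpen_ball (x := x₀) (ε := r)).isClosed_compl.connectedComponentIn y
  have huniv := IsClopen.eq_univ ⟨hclosed, hopen⟩ ⟨y, _root_.mem_connectedComponentIn hy⟩
  have hx₀ : x₀ ∈ (ball x₀ r)ᶜ := connectedComponentIn_subset _ y (huniv ▸ mem_univ x₀)
  exact hx₀ (mem_ball_self hr)

theorem exists_mem_connectedComponentIn_dist_eq [ConnectedSpace X]
    (hX : UniformlyLocallyQuasiconvex X R C) (hR : 0 < R) (hC : 0 ≤ C)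
    {x₀ y q : X} {r : ℝ} (hr : 0 < r) (hy : y ∈ (ball x₀ r)ᶜ)
    (hq : q ∈ connectedComponentIn (ball x₀ r)ᶜ y) (hfar : r + C * R ≤ dist x₀ q) :
    ∃ p ∈ connectedComponentIn (ball x₀ r)ᶜ y, dist x₀ p = r + C * R := by
  obtain ⟨z, hz, hnear⟩ := hX.exists_mem_connectedComponentIn_dist_le hR hC hr hy
  exact isPreconnected_connectedComponentIn.intermediate_value hz hq
    (continuous_const.dist continuous_id).continuousOn ⟨hnear, hfar⟩

end UniformlyLocallyQuasiconvex

theorem statement14_general {X : Type*} [MetricSpace X] [ProperSpace X] [ConnectedSpace X]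
    (R C : ℝ) (hR : 0 < R) (hC : 1 ≤ C)
    (hqc : ∀ x y : X, dist x y ≤ R →
      ∃ γ : ℝ → X, LipschitzOnWith (Real.toNNReal (C * dist x y)) γ (Set.Icc 0 1) ∧
        γ 0 = x ∧ γ 1 = y)
    (x₀ : X) (r : ℝ) (hr : 0 < r) :
    {E : Set X | (∃ y ∈ (ball x₀ r)ᶜ, E = connectedComponentIn (ball x₀ r)ᶜ y) ∧
      (E ∩ (ball x₀ (r + 2 * C * R))ᶜ).Nonempty}.Finite := by
  have hX : UniformlyLocallyQuasiconvex X R C := hqc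
  have hC₀ : 0 ≤ C := zero_le_one.trans hC
  refine (isCompact_sphere x₀ (r + C * R)).totallyBounded.finite_of_forall_inter_nonempty hR ?_ ?_
  · rintro E ⟨⟨y, hy, rfl⟩, q, hq, hqfar⟩
    have hfar : r + C * R ≤ dist x₀ q := by
      rw [mem_compl_iff, mem_ball', not_lt] at hqfar
      nlinarith
    obtain ⟨p, hp, hpdist⟩ := hX.exists_mem_connectedComponentIn_dist_eq hR hC₀ hr hy hq hfar
    exact ⟨p, hp, mem_sphere'.2 hpdist⟩
  · rintro E ⟨⟨y, -, rfl⟩, -⟩ E' ⟨⟨y', -, rfl⟩, -⟩ a ⟨ha, has⟩ b ⟨hb, -⟩ hab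
    have hba : b ∈ connectedComponentIn (ball x₀ r)ᶜ a :=
      hX.mem_connectedComponentIn hC₀ hab.le
        (closedBall_subset_compl_ball_of_add_le_dist (mem_sphere'.1 has).ge)
    rw [connectedComponentIn_eq ha, connectedComponentIn_eq hb, connectedComponentIn_eq hba]

/-- let `(X,d)` be a proper, connected, unbounded metric space that is uniformly
locally quasiconvex with constants `R ∈ (0,∞)` and `C ≥ 1`. Then for every `x₀ ∈ X` and
`r > 0`, only finitely many connected components of `X ∖ B(x₀,r)` meet
`X ∖ B(x₀, r + 2CR)`. -/
theorem statement14 {X : Type*} [MetricSpace X] [ProperSpace X] [ConnectedSpace X]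
    (hunbdd : ¬ Bornology.IsBounded (Set.univ : Set X))
    (R C : ℝ) (hR : 0 < R) (hC : 1 ≤ C)
    (hqc : ∀ x y : X, dist x y ≤ R →
      ∃ γ : ℝ → X, LipschitzOnWith (Real.toNNReal (C * dist x y)) γ (Set.Icc 0 1) ∧
        γ 0 = x ∧ γ 1 = y)
    (x₀ : X) (r : ℝ) (hr : 0 < r) :
    {E : Set X | (∃ y ∈ (ball x₀ r)ᶜ, E = connectedComponentIn (ball x₀ r)ᶜ y) ∧
      (E ∩ (ball x₀ (r + 2 * C * R))ᶜ).Nonempty}.Finite :=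
  statement14_general R C hR hC hqc x₀ r hr
end
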